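/- arXiv:2502.18203 — 10 statements merged into one kernel-verified Lean document; each statement's English description precedes it below -/
import Mathlib

section
/- Let G be a subgroup of SL₂(ℤ) of finite index. Then there exists a positive integer n such that for every 2×2 integer matrix B, the matrix n·B lies in the ℤ-submodule of the additive group of 2×2 integer matrices generated by the elements of G (viewed as integer matrices). -/
/-!
A finite-index subgroup `G` contains a power `U = Tᵃ` of the upper unipotent matrix and a power
`L = (Tᵀ)ᵇ` of the lower one, hence also `U L` and `L U`. Already the span of `1, U, L, U L, L U`
contains `ab • M₂`: the combinations `U L - U - L + 1`, `L U - U - L + 1`, `b (U - 1)`, `a (L - 1)`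
are `ab` times the four matrix units.
-/

open Matrix MatrixGroups

/-- `M(G)`: the ℤ-submodule of 2×2 integer matrices generated by the elements of `G`. -/
def matSpan (G : Subgroup SL(2, ℤ)) : Submodule ℤ (Matrix (Fin 2) (Fin 2) ℤ) :=
  Submodule.span ℤ ((fun A : SL(2, ℤ) => (A : Matrix (Fin 2) (Fin 2) ℤ)) '' (G : Set SL(2, ℤ)))

open ModularGroup
open scoped Matrix.SpecialLinearGroup

theorem smul_mem_of_unipotents_mem {R : Type*} [CommRing R]
    {M : Submodule R (Matrix (Fin 2) (Fin 2) R)} {a b : R} (h1 : 1 ∈ M)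
    (hU : !![1, a; 0, 1] ∈ M) (hL : !![1, 0; b, 1] ∈ M)
    (hUL : !![1, a; 0, 1] * !![1, 0; b, 1] ∈ M) (hLU : !![1, 0; b, 1] * !![1, a; 0, 1] ∈ M)
    (B : Matrix (Fin 2) (Fin 2) R) : (a * b) • B ∈ M := by
  have key : (a * b) • B =
      B 0 0 • (!![1, a; 0, 1] * !![1, 0; b, 1]) + B 1 1 • (!![1, 0; b, 1] * !![1, a; 0, 1])
      + (B 0 1 * b - B 0 0 - B 1 1) • !![1, a; 0, 1]
      + (B 1 0 * a - B 0 0 - B 1 1) • !![1, 0; b, 1]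
      + (B 0 0 + B 1 1 - B 0 1 * b - B 1 0 * a) • (1 : Matrix (Fin 2) (Fin 2) R) := by
    ext i j
    fin_cases i <;> fin_cases j <;> simp [Matrix.one_fin_two] <;> ring
  rw [key]
  apply_rules [add_mem, Submodule.smul_mem]

theorem coe_T_pow (n : ℕ) :
    ((T ^ n : SL(2, ℤ)) : Matrix (Fin 2) (Fin 2) ℤ) = !![1, (n : ℤ); 0, 1] := by
  simpa using coe_T_zpow n

theorem coe_transpose_T_pow (n : ℕ) :
    ((Tᵀ ^ n : SL(2, ℤ)) : Matrix (Fin 2) (Fin 2) ℤ) = !![1, 0; (n : ℤ), 1] := by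
  rw [Matrix.SpecialLinearGroup.coe_pow, Matrix.SpecialLinearGroup.coe_transpose, ← transpose_pow,
    ← Matrix.SpecialLinearGroup.coe_pow, coe_T_pow]
  ext i j
  fin_cases i <;> fin_cases j <;> rfl

theorem mem_matSpan_of_mem {G : Subgroup SL(2, ℤ)} {g : SL(2, ℤ)} (hg : g ∈ G) :
    (g : Matrix (Fin 2) (Fin 2) ℤ) ∈ matSpan G :=
  Submodule.subset_span ⟨g, hg, rfl⟩

/-- For a finite-index subgroup `G ≤ SL₂(ℤ)` there is a positive integer `n` with
`n·M₂ ⊆ M(G)`. -/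
theorem stmt_1 (G : Subgroup SL(2, ℤ)) (hG : G.FiniteIndex) :
    ∃ n : ℕ, 0 < n ∧ ∀ B : Matrix (Fin 2) (Fin 2) ℤ, (n : ℤ) • B ∈ matSpan G := by
  obtain ⟨a, ha, -, hUa⟩ := G.exists_pow_mem_of_index_ne_zero hG.index_ne_zero T
  obtain ⟨b, hb, -, hLb⟩ := G.exists_pow_mem_of_index_ne_zero hG.index_ne_zero Tᵀ
  refine ⟨a * b, Nat.mul_pos ha hb, fun B => ?_⟩
  have h1 := mem_matSpan_of_mem G.one_mem
  have hU := mem_matSpan_of_mem hUa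
  have hL := mem_matSpan_of_mem hLb
  have hUL := mem_matSpan_of_mem (G.mul_mem hUa hLb)
  have hLU := mem_matSpan_of_mem (G.mul_mem hLb hUa)
  rw [Matrix.SpecialLinearGroup.coe_one] at h1
  rw [coe_T_pow] at hU
  rw [coe_transpose_T_pow] at hL
  rw [Matrix.SpecialLinearGroup.coe_mul, coe_T_pow, coe_transpose_T_pow] at hUL hLU
  push_cast
  exact smul_mem_of_unipotents_mem h1 hU hL hUL hLU B
end

section
/- Let P ∈ SL₂(ℝ) be such that for every A ∈ SL₂(ℤ), the conjugate P⁻¹·A·P has integer entries. Then P itself has integer entries, so P ∈ SL₂(ℤ). (Equivalently, in the paper's notation, N(SL₂(ℤ)) = 1: the only coset P·SL₂(ℤ) in SL₂(ℝ)/SL₂(ℤ) with P⁻¹·SL₂(ℤ)·P ⊆ SL₂(ℤ) is the coset of the identity.) -/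
open Matrix MatrixGroups

/-- A real 2×2 matrix has integer entries. -/
def IsIntegerMatrix (M : Matrix (Fin 2) (Fin 2) ℝ) : Prop :=
  ∀ i j, ∃ k : ℤ, M i j = (k : ℝ)

/-!
Conjugation by `P` is additive and the additive span of `SL₂(ℤ)` is all of `M₂(ℤ)`, so `P⁻¹ E P`
is integral for every matrix unit `E`. Since `P⁻¹ = adj P` has the entries of `P` up to sign, every
product of two entries of `P` is an integer. Write `P = !![a, b; c, d]` and `k = a d`, so that
`b c = k - 1`. Then `a² ∣ k²` and `b² ∣ (k - 1)²`, so the integers `a²` and `b²` are coprime with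
square product `(a b)²`; hence `a²` is a perfect square and `a ∈ ℤ`. The other entries are treated
in the same way.
-/

theorem isIntegerMatrix_iff_mem_range {M : Matrix (Fin 2) (Fin 2) ℝ} :
    IsIntegerMatrix M ↔ M ∈ (Int.castRingHom ℝ).mapMatrix.range := by
  constructor
  · intro h
    choose k hk using h
    exact ⟨Matrix.of k, by ext i j; simp [hk]⟩
  · rintro ⟨N, rfl⟩ i j
    exact ⟨N i j, rfl⟩

namespace Matrix

theorem mul_single_one_mul_apply {n R : Type*} [Fintype n] [DecidableEq n] [Semiring R]
    (X Y : Matrix n n R) (i j k l : n) :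
    (X * single i j (1 : R) * Y : Matrix n n R) k l = X k i * Y j l := by
  simp [mul_apply, single_apply, ite_and, Finset.sum_ite_eq]

theorem inv_apply_rev_of_det_eq_one {R : Type*} [CommRing R] {P : Matrix (Fin 2) (Fin 2) R}
    (hP : P.det = 1) (i j : Fin 2) : P⁻¹ j.rev i.rev = (-1) ^ (i.val + j.val) * P i j := by
  rw [inv_def, hP, adjugate_fin_two]
  fin_cases i <;> fin_cases j <;> simp

theorem SpecialLinearGroup.addSubgroupClosure_range_coe_fin_two {R : Type*} [CommRing R] :
    AddSubgroup.closure (Set.range ((↑) : SL(2, R) → Matrix (Fin 2) (Fin 2) R)) = ⊤ := by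
  set S := AddSubgroup.closure (Set.range ((↑) : SL(2, R) → Matrix (Fin 2) (Fin 2) R))
  have mem (A : Matrix (Fin 2) (Fin 2) R) (hA : A.det = 1) : A ∈ S :=
    AddSubgroup.subset_closure ⟨⟨A, hA⟩, rfl⟩
  have upper (r : R) : !![1, r; 0, 1] ∈ S := mem _ (by simp [det_fin_two])
  have lower (r : R) : !![1, 0; r, 1] ∈ S := mem _ (by simp [det_fin_two])
  have single_mem (i j : Fin 2) (r : R) : single i j r ∈ S := by
    have h00 : single 0 0 r = !![1 + r, 1; r, 1] - !![1, 1; 0, 1] - !![1, 0; r, 1] + 1 := by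
      ext i j; fin_cases i <;> fin_cases j <;> simp
    have h01 : single 0 1 r = !![1, r; 0, 1] - 1 := by
      ext i j; fin_cases i <;> fin_cases j <;> simp
    have h10 : single 1 0 r = !![1, 0; r, 1] - 1 := by
      ext i j; fin_cases i <;> fin_cases j <;> simp
    have h11 : single 1 1 r = !![1, r; 1, 1 + r] - !![1, r; 0, 1] - !![1, 0; 1, 1] + 1 := by
      ext i j; fin_cases i <;> fin_cases j <;> simp
    fin_cases i <;> fin_cases j
    · exact h00 ▸ add_mem (sub_mem (sub_mem (mem _ (by simp [det_fin_two])) (upper 1)) (lower r))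
        (mem 1 det_one)
    · exact h01 ▸ sub_mem (upper r) (mem 1 det_one)
    · exact h10 ▸ sub_mem (lower r) (mem 1 det_one)
    · exact h11 ▸ add_mem (sub_mem (sub_mem (mem _ (by simp [det_fin_two])) (upper r)) (lower 1))
        (mem 1 det_one)
  refine eq_top_iff.2 fun M _ => ?_
  rw [matrix_eq_sum_single M]
  exact sum_mem fun i _ => sum_mem fun j _ => single_mem i j (M i j)

end Matrix

theorem isIntegerMatrix_mul_mul_of_forall_specialLinearGroup {X Y : Matrix (Fin 2) (Fin 2) ℝ}
    (h : ∀ A : SL(2, ℤ), IsIntegerMatrix (X * (A : Matrix (Fin 2) (Fin 2) ℤ).map Int.cast * Y))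
    (M : Matrix (Fin 2) (Fin 2) ℤ) : IsIntegerMatrix (X * M.map Int.cast * Y) := by
  let f : Matrix (Fin 2) (Fin 2) ℤ →+ Matrix (Fin 2) (Fin 2) ℝ :=
    (AddMonoidHom.mulRight Y).comp
      ((AddMonoidHom.mulLeft X).comp (Int.castRingHom ℝ).mapMatrix.toAddMonoidHom)
  have hle : AddSubgroup.closure (Set.range ((↑) : SL(2, ℤ) → Matrix (Fin 2) (Fin 2) ℤ)) ≤
      (Int.castRingHom ℝ).mapMatrix.range.toAddSubgroup.comap f := by
    rw [AddSubgroup.closure_le]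
    rintro _ ⟨A, rfl⟩
    exact isIntegerMatrix_iff_mem_range.1 (h A)
  rw [SpecialLinearGroup.addSubgroupClosure_range_coe_fin_two, top_le_iff] at hle
  exact isIntegerMatrix_iff_mem_range.2 (hle ▸ AddSubgroup.mem_top M : M ∈ _)

theorem mul_eq_sq_of_sq_eq_intCast {x y : ℝ} {m n k : ℤ} (hx : x ^ 2 = m) (hy : y ^ 2 = n)
    (hxy : x * y = k) : m * n = k ^ 2 := by
  have h : ((m * n : ℤ) : ℝ) = ((k ^ 2 : ℤ) : ℝ) := by
    push_cast
    rw [← hx, ← hy, ← hxy]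
    ring
  exact_mod_cast h

theorem exists_int_eq_of_isCoprime_sq {x y : ℝ} {m n : ℤ} (hx : x ^ 2 = m) (hy : y ^ 2 = n)
    (hxy : ∃ k : ℤ, x * y = k) (hmn : IsCoprime m n) : ∃ s : ℤ, x = s := by
  obtain ⟨k, hk⟩ := hxy
  obtain ⟨s, hs⟩ := Int.sq_of_isCoprime hmn (mul_eq_sq_of_sq_eq_intCast hx hy hk)
  have hxs : x ^ 2 = (s : ℝ) ^ 2 := by
    have hs' : (m : ℝ) = s ^ 2 ∨ (m : ℝ) = -s ^ 2 := by exact_mod_cast hs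
    rcases hs' with hs' | hs' <;> nlinarith [sq_nonneg x, sq_nonneg (s : ℝ)]
  rcases sq_eq_sq_iff_eq_or_eq_neg.1 hxs with rfl | rfl
  exacts [⟨s, rfl⟩, ⟨-s, by push_cast; rfl⟩]

theorem isIntegerMatrix_of_det_eq_one_of_mul_apply {P : Matrix (Fin 2) (Fin 2) ℝ}
    (hP : P.det = 1) (h : ∀ i j k l, ∃ n : ℤ, P i j * P k l = n) : IsIntegerMatrix P := by
  rw [det_fin_two] at hP
  have hsq i j : ∃ m : ℤ, P i j ^ 2 = m := by
    obtain ⟨m, hm⟩ := h i j i j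
    exact ⟨m, by rw [sq, hm]⟩
  obtain ⟨a, ha⟩ := hsq 0 0
  obtain ⟨b, hb⟩ := hsq 0 1
  obtain ⟨c, hc⟩ := hsq 1 0
  obtain ⟨d, hd⟩ := hsq 1 1
  obtain ⟨k, hk⟩ := h 0 0 1 1
  have hk' : P 0 1 * P 1 0 = ((k - 1 : ℤ) : ℝ) := by push_cast; linarith
  have hcop : IsCoprime (k ^ 2) ((k - 1) ^ 2) :=
    IsCoprime.pow (⟨1, -1, by ring⟩ : IsCoprime k (k - 1))
  have had : a ∣ k ^ 2 := Dvd.intro _ (mul_eq_sq_of_sq_eq_intCast ha hd hk)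
  have hda : d ∣ k ^ 2 := Dvd.intro_left _ (mul_eq_sq_of_sq_eq_intCast ha hd hk)
  have hbc : b ∣ (k - 1) ^ 2 := Dvd.intro _ (mul_eq_sq_of_sq_eq_intCast hb hc hk')
  have hcb : c ∣ (k - 1) ^ 2 := Dvd.intro_left _ (mul_eq_sq_of_sq_eq_intCast hb hc hk')
  intro i j
  fin_cases i <;> fin_cases j
  · exact exists_int_eq_of_isCoprime_sq ha hb (h 0 0 0 1)
      ((hcop.of_isCoprime_of_dvd_left had).of_isCoprime_of_dvd_right hbc)
  · exact exists_int_eq_of_isCoprime_sq hb ha (h 0 1 0 0)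
      ((hcop.symm.of_isCoprime_of_dvd_left hbc).of_isCoprime_of_dvd_right had)
  · exact exists_int_eq_of_isCoprime_sq hc hd (h 1 0 1 1)
      ((hcop.symm.of_isCoprime_of_dvd_left hcb).of_isCoprime_of_dvd_right hda)
  · exact exists_int_eq_of_isCoprime_sq hd hc (h 1 1 1 0)
      ((hcop.of_isCoprime_of_dvd_left hda).of_isCoprime_of_dvd_right hcb)

/-- If `P ∈ SL₂(ℝ)` conjugates every element of `SL₂(ℤ)` to an integer matrix,
then `P` itself has integer entries. -/
theorem stmt_3 (P : Matrix (Fin 2) (Fin 2) ℝ) (hP : P.det = 1)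
    (h : ∀ A : SL(2, ℤ),
      IsIntegerMatrix (P⁻¹ * ((A : Matrix (Fin 2) (Fin 2) ℤ)).map (Int.cast : ℤ → ℝ) * P)) :
    IsIntegerMatrix P := by
  refine isIntegerMatrix_of_det_eq_one_of_mul_apply hP fun i j k l => ?_
  have hmap : (single i.rev k (1 : ℤ)).map (Int.cast : ℤ → ℝ) = single i.rev k 1 := by
    simpa using map_single i.rev k (1 : ℤ) (Int.castRingHom ℝ)
  obtain ⟨n, hn⟩ :=
    isIntegerMatrix_mul_mul_of_forall_specialLinearGroup h (single i.rev k 1) j.rev l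
  rw [hmap, mul_single_one_mul_apply, inv_apply_rev_of_det_eq_one hP] at hn
  refine ⟨(-1) ^ (i.val + j.val) * n, ?_⟩
  push_cast
  rw [← hn, ← mul_assoc, ← mul_assoc, ← mul_pow]
  norm_num
end

section
/- Let G be a subgroup of SL₂(ℤ) of finite index and let P ∈ SL₂(ℝ) be such that for every A ∈ G the conjugate P⁻¹·A·P has integer entries. Then there exists a positive integer m such that √m·P is a 2×2 integer matrix; moreover det(√m·P) = m. -/
/-!
Finite index gives `N > 0` with `N • E₁₂ + 1` and `N • E₂₁ + 1` in `G`. The real matrices `X` with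
`P⁻¹ X P` integral form a subring, so it contains `N • E₁₂`, `N • E₂₁` and hence `N² • E_ij` for all
`i, j`. As `P⁻¹ E_ij P` has `(k, l)` entry `(P⁻¹)_{ki} P_{jl}`, choosing `(P⁻¹)_{ki} ≠ 0` makes
`s • P` integral for `s = |N² (P⁻¹)_{ki}| > 0`, and then `m = det (s • P) = s²`.
-/

open Matrix MatrixGroups

theorem Subgroup.exists_pos_forall_pow_mem {G : Type*} [Group G] (H : Subgroup G)
    [H.FiniteIndex] : ∃ N, 0 < N ∧ ∀ g : G, g ^ N ∈ H :=
  ⟨H.normalCore.index, Nat.pos_of_ne_zero Subgroup.FiniteIndex.index_ne_zero,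
    fun g => H.normalCore_le (H.normalCore.pow_index_mem g)⟩

variable {n : Type*} [Fintype n] [DecidableEq n]

namespace Matrix

theorem SpecialLinearGroup.transvection_pow {R : Type*} [CommRing R] {i j : n} (hij : i ≠ j)
    (b : R) (N : ℕ) : transvection hij b ^ N = transvection hij (N • b) := by
  induction N with
  | zero => simp
  | succ N ih => rw [pow_succ, ih, ← SpecialLinearGroup.transvection_add, succ_nsmul]

theorem mul_single_mul_apply {α : Type*} [Semiring α] (A B : Matrix n n α) (i j k l : n) (c : α) :
    (A * single i j c * B) k l = A k i * c * B j l := by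
  simp [Matrix.mul_apply, Matrix.single_apply, ite_and]

noncomputable def conjRingHom (P : Matrix n n ℝ) (hP : IsUnit P.det) :
    Matrix n n ℝ →+* Matrix n n ℝ where
  toFun X := P⁻¹ * X * P
  map_one' := by simp [nonsing_inv_mul _ hP]
  map_mul' X Y := by simp only [Matrix.mul_assoc, mul_nonsing_inv_cancel_left _ _ hP]
  map_zero' := by simp
  map_add' X Y := by simp [Matrix.mul_add, Matrix.add_mul]

noncomputable def integralConjSubring (P : Matrix n n ℝ) (hP : IsUnit P.det) :
    Subring (Matrix n n ℝ) :=
  (Int.castRingHom ℝ).mapMatrix.range.comap (conjRingHom P hP)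

theorem mem_integralConjSubring {P : Matrix n n ℝ} {hP : IsUnit P.det} {X : Matrix n n ℝ} :
    X ∈ integralConjSubring P hP ↔ ∃ B : Matrix n n ℤ, B.map (Int.cast : ℤ → ℝ) = P⁻¹ * X * P :=
  Iff.rfl

theorem single_mem_of_transvection_mem {R : Subring (Matrix n n ℝ)} {i j : n} (hij : i ≠ j) {b : ℤ}
    (h : (SpecialLinearGroup.transvection hij b : Matrix n n ℤ).map (Int.cast : ℤ → ℝ) ∈ R) :
    single i j (b : ℝ) ∈ R := by
  have hcoe : (SpecialLinearGroup.transvection hij b : Matrix n n ℤ).map (Int.cast : ℤ → ℝ)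
      = 1 + single i j (b : ℝ) := by
    rw [SpecialLinearGroup.transvection_coe]
    ext k l
    simp [Matrix.one_apply, Matrix.single_apply]
  simpa [hcoe] using sub_mem h (one_mem R)

theorem single_natCast_sq_mem [Nontrivial n] {α : Type*} [Ring α] {R : Subring (Matrix n n α)}
    {N : ℕ} (h : ∀ i j, i ≠ j → single i j (N : α) ∈ R) (i j : n) :
    single i j ((N : α) * N) ∈ R := by
  rcases eq_or_ne i j with rfl | hij
  · obtain ⟨k, hki⟩ := exists_ne i
    simpa using mul_mem (h i k hki.symm) (h k i hki)
  · simpa [smul_single] using nsmul_mem (h i j hij) N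

theorem exists_pos_smul_mem_range_of_single_mem [Nonempty n] {P : Matrix n n ℝ}
    {hP : IsUnit P.det} {c : ℝ} (hc : c ≠ 0) (h : ∀ i j, single i j c ∈ integralConjSubring P hP) :
    ∃ s : ℝ, 0 < s ∧ s • P ∈ (Int.castRingHom ℝ).mapMatrix.range := by
  have hPinv : P⁻¹ ≠ 0 :=
    ((isUnit_iff_isUnit_det _).mpr (isUnit_nonsing_inv_det P hP)).ne_zero
  obtain ⟨k, i, hki⟩ : ∃ k i, P⁻¹ k i ≠ 0 := by
    by_contra! h0
    exact hPinv (Matrix.ext h0)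
  choose B hB using fun j => mem_integralConjSubring.mp (h i j)
  have hmem : (P⁻¹ k i * c) • P ∈ (Int.castRingHom ℝ).mapMatrix.range := by
    refine ⟨Matrix.of fun j l => B j k l, Matrix.ext fun j l => ?_⟩
    have hentry := congrFun₂ (hB j) k l
    simp only [map_apply, mul_single_mul_apply] at hentry
    simp [hentry, mul_assoc]
  refine ⟨|P⁻¹ k i * c|, abs_pos.mpr (mul_ne_zero hki hc), ?_⟩
  rcases abs_choice (P⁻¹ k i * c) with habs | habs <;> rw [habs]
  · exact hmem
  · simpa only [neg_smul] using neg_mem hmem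

end Matrix

theorem isIntegerMatrix_iff_exists_map_eq {M : Matrix (Fin 2) (Fin 2) ℝ} :
    IsIntegerMatrix M ↔ ∃ B : Matrix (Fin 2) (Fin 2) ℤ, B.map (Int.cast : ℤ → ℝ) = M := by
  refine ⟨fun h => ?_, fun ⟨B, hB⟩ i j => ⟨B i j, hB ▸ rfl⟩⟩
  choose B hB using h
  exact ⟨Matrix.of B, Matrix.ext fun i j => (hB i j).symm⟩

theorem exists_sqrt_smul_eq_map_of_smul_mem_range {P : Matrix (Fin 2) (Fin 2) ℝ}
    (hP : P.det = 1) {s : ℝ} (hs : 0 < s) (hsP : s • P ∈ (Int.castRingHom ℝ).mapMatrix.range) :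
    ∃ m : ℕ, 0 < m ∧ ∃ B : Matrix (Fin 2) (Fin 2) ℤ,
      (Real.sqrt m) • P = B.map (Int.cast : ℤ → ℝ) ∧ B.det = (m : ℤ) := by
  obtain ⟨B, hB⟩ := hsP
  have hdet : (B.det : ℝ) = s ^ 2 := by
    rw [← eq_intCast (Int.castRingHom ℝ), RingHom.map_det, hB, det_smul, hP]
    simp
  have hBpos : 0 < B.det := by exact_mod_cast hdet ▸ pow_pos hs 2
  refine ⟨B.det.toNat, by omega, B, ?_, by omega⟩
  have hm : ((B.det.toNat : ℕ) : ℝ) = s ^ 2 := by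
    rw [← hdet]
    exact_mod_cast Int.toNat_of_nonneg hBpos.le
  rw [hm, Real.sqrt_sq hs.le]
  exact hB.symm

/-- If `P ∈ SL₂(ℝ)` conjugates a finite-index subgroup `G ≤ SL₂(ℤ)` into integer matrices,
then `√m·P` is an integer matrix of determinant `m` for some positive integer `m`. -/
theorem stmt_4 (G : Subgroup SL(2, ℤ)) (hG : G.FiniteIndex)
    (P : Matrix (Fin 2) (Fin 2) ℝ) (hP : P.det = 1)
    (h : ∀ A ∈ G,
      IsIntegerMatrix (P⁻¹ * ((A : Matrix (Fin 2) (Fin 2) ℤ)).map (Int.cast : ℤ → ℝ) * P)) :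
    ∃ m : ℕ, 0 < m ∧ ∃ B : Matrix (Fin 2) (Fin 2) ℤ,
      (Real.sqrt m) • P = B.map (Int.cast : ℤ → ℝ) ∧ B.det = (m : ℤ) := by
  have hPu : IsUnit P.det := hP ▸ isUnit_one
  obtain ⟨N, hN, hpow⟩ := G.exists_pos_forall_pow_mem
  have hsingle (i j : Fin 2) (hij : i ≠ j) : single i j (N : ℝ) ∈ integralConjSubring P hPu := by
    have hmem := h _ (hpow (SpecialLinearGroup.transvection hij 1))
    rw [SpecialLinearGroup.transvection_pow, nsmul_one] at hmem
    exact_mod_cast single_mem_of_transvection_mem hij (isIntegerMatrix_iff_exists_map_eq.mp hmem)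
  obtain ⟨s, hs, hsP⟩ :=
    exists_pos_smul_mem_range_of_single_mem (by positivity) (single_natCast_sq_mem hsingle)
  exact exists_sqrt_smul_eq_map_of_smul_mem_range hP hs hsP
end

section
/- Let G be a subgroup of SL₂(ℤ) of finite index. Then there exist finitely many matrices P₁, …, P_N ∈ SL₂(ℝ) such that every P ∈ SL₂(ℝ) with the property that P⁻¹·A·P has integer entries for all A ∈ G can be written as P = P_j·X for some j ∈ {1, …, N} and some X ∈ SL₂(ℤ). Equivalently, N(G) is finite for every finite-index subgroup G of SL₂(ℤ). -/
open Matrix MatrixGroups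

/-!
Since `G` has finite index, it contains `T ^ k` and `(Tᵀ) ^ m` for some `k, m > 0`, and the
condition on `P` only depends on its coset `P · SL₂(ℤ)`. Integrality of `P⁻¹ T^k P` makes the
bottom row of `P` orthogonal to a primitive integer vector, so a column operation in `SL₂(ℤ)`
turns `P` into `[[a, c], [0, a⁻¹]]`, and a further one achieves `a > 0`, `0 ≤ c < a`. For such a
matrix the two conjugates are integral only if `k / a²`, `l = m a²` and `i = m a c` are integers.
Then `l · (k / a²) = m k` gives `l ≤ m k`, while `0 ≤ i < l`, and `(l, i)` determines the matrix:
only finitely many cosets occur.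
-/

open ModularGroup

noncomputable def toRealMatrix : SL(2, ℤ) →* Matrix (Fin 2) (Fin 2) ℝ :=
  SpecialLinearGroup.coeMonoidHom.comp (SpecialLinearGroup.map (Int.castRingHom ℝ))

theorem toRealMatrix_apply (X : SL(2, ℤ)) :
    toRealMatrix X = (X : Matrix (Fin 2) (Fin 2) ℤ).map (Int.cast : ℤ → ℝ) :=
  rfl

theorem det_toRealMatrix (X : SL(2, ℤ)) : (toRealMatrix X).det = 1 :=
  (SpecialLinearGroup.map (Int.castRingHom ℝ) X).det_coe

theorem inv_toRealMatrix (X : SL(2, ℤ)) : (toRealMatrix X)⁻¹ = toRealMatrix X⁻¹ :=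
  inv_eq_right_inv (by rw [← map_mul, mul_inv_cancel, map_one])

theorem toRealMatrix_neg (X : SL(2, ℤ)) : toRealMatrix (-X) = -toRealMatrix X := by
  rw [toRealMatrix_apply, SpecialLinearGroup.coe_neg]
  exact Matrix.map_neg _ Int.cast_neg _

theorem toRealMatrix_T_zpow (n : ℤ) : toRealMatrix (T ^ n) = !![1, (n : ℝ); 0, 1] := by
  ext i j
  fin_cases i <;> fin_cases j <;> simp [toRealMatrix_apply, coe_T_zpow]

theorem toRealMatrix_T_pow (n : ℕ) : toRealMatrix (T ^ n) = !![1, (n : ℝ); 0, 1] := by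
  simpa using toRealMatrix_T_zpow n

theorem toRealMatrix_transpose_T_pow (n : ℕ) :
    toRealMatrix (T.transpose ^ n) = !![1, 0; (n : ℝ), 1] := by
  rw [map_pow, show toRealMatrix T.transpose = (toRealMatrix T)ᵀ from rfl, ← transpose_pow,
    ← map_pow, toRealMatrix_T_pow]
  ext i j
  fin_cases i <;> fin_cases j <;> simp

theorem isIntegerMatrix_iff {M : Matrix (Fin 2) (Fin 2) ℝ} :
    IsIntegerMatrix M ↔ ∃ N : Matrix (Fin 2) (Fin 2) ℤ, N.map (Int.cast : ℤ → ℝ) = M := by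
  refine ⟨fun h => ?_, ?_⟩
  · choose N hN using h
    exact ⟨Matrix.of N, by ext i j; exact (hN i j).symm⟩
  · rintro ⟨N, rfl⟩ i j
    exact ⟨N i j, rfl⟩

theorem IsIntegerMatrix.mul {A B : Matrix (Fin 2) (Fin 2) ℝ} (hA : IsIntegerMatrix A)
    (hB : IsIntegerMatrix B) : IsIntegerMatrix (A * B) := by
  obtain ⟨M, rfl⟩ := isIntegerMatrix_iff.mp hA
  obtain ⟨N, rfl⟩ := isIntegerMatrix_iff.mp hB
  exact isIntegerMatrix_iff.mpr ⟨M * N, (Int.castRingHom ℝ).mapMatrix.map_mul M N⟩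

theorem isIntegerMatrix_toRealMatrix (X : SL(2, ℤ)) : IsIntegerMatrix (toRealMatrix X) :=
  isIntegerMatrix_iff.mpr ⟨X, rfl⟩

theorem IsIntegerMatrix.conj_mul_toRealMatrix {P A : Matrix (Fin 2) (Fin 2) ℝ}
    (h : IsIntegerMatrix (P⁻¹ * A * P)) (X : SL(2, ℤ)) :
    IsIntegerMatrix ((P * toRealMatrix X)⁻¹ * A * (P * toRealMatrix X)) := by
  rw [Matrix.mul_inv_rev, inv_toRealMatrix]
  simpa only [Matrix.mul_assoc] using
    ((isIntegerMatrix_toRealMatrix X⁻¹).mul h).mul (isIntegerMatrix_toRealMatrix X)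

theorem inv_fin_two_of_det_eq_one {P : Matrix (Fin 2) (Fin 2) ℝ} (hP : P.det = 1) :
    P⁻¹ = !![P 1 1, -P 0 1; -P 1 0, P 0 0] := by
  rw [inv_def, hP, adjugate_fin_two]
  simp

theorem conj_upperUnipotent_eq {P : Matrix (Fin 2) (Fin 2) ℝ} (hP : P.det = 1) (k : ℝ) :
    P⁻¹ * !![1, k; 0, 1] * P =
      !![1 + k * P 1 0 * P 1 1, k * P 1 1 ^ 2; -(k * P 1 0 ^ 2), 1 - k * P 1 0 * P 1 1] := by
  rw [inv_fin_two_of_det_eq_one hP, eta_fin_two P]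
  rw [det_fin_two] at hP
  ext i j
  fin_cases i <;> fin_cases j <;> simp <;> grind

theorem conj_lowerUnipotent_eq {P : Matrix (Fin 2) (Fin 2) ℝ} (hP : P.det = 1) (m : ℝ) :
    P⁻¹ * !![1, 0; m, 1] * P =
      !![1 - m * P 0 0 * P 0 1, -(m * P 0 1 ^ 2); m * P 0 0 ^ 2, 1 + m * P 0 0 * P 0 1] := by
  rw [inv_fin_two_of_det_eq_one hP, eta_fin_two P]
  rw [det_fin_two] at hP
  ext i j
  fin_cases i <;> fin_cases j <;> simp <;> grind

theorem exists_isCoprime_mul_add_mul_eq_zero {r s : ℝ} {e f : ℤ} (hef : e ≠ 0 ∨ f ≠ 0)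
    (h : r * e + s * f = 0) : ∃ x y : ℤ, IsCoprime x y ∧ r * x + s * y = 0 := by
  obtain ⟨g, x, y, hg, hxy, rfl, rfl⟩ := Int.exists_gcd_one' (Int.gcd_pos_iff.mpr hef)
  refine ⟨x, y, Int.isCoprime_iff_gcd_eq_one.mpr hxy, ?_⟩
  have hg' : (g : ℝ) ≠ 0 := by positivity
  push_cast at h
  exact (mul_eq_zero.mp (by linear_combination h : (r * x + s * y) * g = 0)).resolve_right hg'

theorem exists_isCoprime_of_isIntegerMatrix_conj_upperUnipotent {P : Matrix (Fin 2) (Fin 2) ℝ}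
    (hP : P.det = 1) {k : ℝ} (hk : k ≠ 0) (h : IsIntegerMatrix (P⁻¹ * !![1, k; 0, 1] * P)) :
    ∃ x y : ℤ, IsCoprime x y ∧ P 1 0 * x + P 1 1 * y = 0 := by
  by_cases h10 : P 1 0 = 0
  · exact exists_isCoprime_mul_add_mul_eq_zero (e := 1) (f := 0) (by simp) (by simp [h10])
  rw [conj_upperUnipotent_eq hP] at h
  obtain ⟨e, he⟩ := h 0 0
  obtain ⟨f, hf⟩ := h 1 0
  simp only [of_apply, cons_val', cons_val_zero, cons_val_one, empty_val',
    cons_val_fin_one] at he hf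
  refine exists_isCoprime_mul_add_mul_eq_zero (e := e - 1) (f := f) (Or.inr ?_) ?_
  · rintro rfl
    exact neg_ne_zero.mpr (mul_ne_zero hk (pow_ne_zero 2 h10)) (by simpa using hf)
  · push_cast
    linear_combination -P 1 0 * he - P 1 1 * hf

theorem exists_mul_toRealMatrix_apply_one_zero_eq_zero (P : Matrix (Fin 2) (Fin 2) ℝ) {x y : ℤ}
    (hxy : IsCoprime x y) (h : P 1 0 * x + P 1 1 * y = 0) :
    ∃ X : SL(2, ℤ), (P * toRealMatrix X) 1 0 = 0 := by
  obtain ⟨u, v, huv⟩ := hxy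
  refine ⟨⟨!![x, -v; y, u], by rw [det_fin_two_of]; linear_combination huv⟩, ?_⟩
  rw [mul_apply, Fin.sum_univ_two]
  exact h

theorem mul_diag_eq_one_of_det_eq_one {Q : Matrix (Fin 2) (Fin 2) ℝ} (hQ : Q.det = 1)
    (h10 : Q 1 0 = 0) : Q 0 0 * Q 1 1 = 1 := by
  simpa [det_fin_two, h10] using hQ

def IsReducedUpper (Q : Matrix (Fin 2) (Fin 2) ℝ) : Prop :=
  Q 1 0 = 0 ∧ 0 < Q 0 0 ∧ 0 ≤ Q 0 1 ∧ Q 0 1 < Q 0 0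

theorem mul_toRealMatrix_T_zpow (Q : Matrix (Fin 2) (Fin 2) ℝ) (n : ℤ) :
    Q * toRealMatrix (T ^ n) = !![Q 0 0, Q 0 0 * n + Q 0 1; Q 1 0, Q 1 0 * n + Q 1 1] := by
  rw [toRealMatrix_T_zpow, eta_fin_two Q, mul_fin_two]
  simp

theorem exists_isReducedUpper_mul_toRealMatrix_of_pos {Q : Matrix (Fin 2) (Fin 2) ℝ}
    (h10 : Q 1 0 = 0) (h00 : 0 < Q 0 0) : ∃ X : SL(2, ℤ), IsReducedUpper (Q * toRealMatrix X) := by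
  refine ⟨T ^ (-⌊Q 0 1 / Q 0 0⌋), ?_⟩
  have h01 : Q 0 0 * ((-⌊Q 0 1 / Q 0 0⌋ : ℤ) : ℝ) + Q 0 1 = Q 0 0 * Int.fract (Q 0 1 / Q 0 0) := by
    rw [Int.fract]
    field_simp
    push_cast
    ring
  rw [mul_toRealMatrix_T_zpow]
  simp only [IsReducedUpper, of_apply, cons_val', cons_val_zero, cons_val_one, empty_val',
    cons_val_fin_one, h10, h01, zero_mul, zero_add]
  exact ⟨trivial, h00, mul_nonneg h00.le (Int.fract_nonneg _),
    mul_lt_of_lt_one_right h00 (Int.fract_lt_one _)⟩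

theorem exists_isReducedUpper_mul_toRealMatrix {Q : Matrix (Fin 2) (Fin 2) ℝ} (hQ : Q.det = 1)
    (h10 : Q 1 0 = 0) : ∃ X : SL(2, ℤ), IsReducedUpper (Q * toRealMatrix X) := by
  have h00 : Q 0 0 ≠ 0 := left_ne_zero_of_mul_eq_one (mul_diag_eq_one_of_det_eq_one hQ h10)
  rcases h00.lt_or_gt with hneg | hpos
  · obtain ⟨X, hX⟩ :=
      exists_isReducedUpper_mul_toRealMatrix_of_pos (Q := -Q) (by simp [h10]) (by simpa using hneg)
    refine ⟨-X, ?_⟩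
    rwa [toRealMatrix_neg, Matrix.mul_neg, ← Matrix.neg_mul]
  · exact exists_isReducedUpper_mul_toRealMatrix_of_pos h10 hpos

theorem exists_isReducedUpper_mul_toRealMatrix_of_conj_upperUnipotent
    {P : Matrix (Fin 2) (Fin 2) ℝ} (hP : P.det = 1) {k : ℝ} (hk : k ≠ 0)
    (h : IsIntegerMatrix (P⁻¹ * !![1, k; 0, 1] * P)) :
    ∃ X : SL(2, ℤ), IsReducedUpper (P * toRealMatrix X) := by
  obtain ⟨x, y, hxy, hker⟩ := exists_isCoprime_of_isIntegerMatrix_conj_upperUnipotent hP hk h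
  obtain ⟨X, hX⟩ := exists_mul_toRealMatrix_apply_one_zero_eq_zero P hxy hker
  obtain ⟨Y, hY⟩ :=
    exists_isReducedUpper_mul_toRealMatrix (by rw [det_mul, hP, det_toRealMatrix, one_mul]) hX
  exact ⟨X * Y, by rwa [map_mul, ← Matrix.mul_assoc]⟩

def reducedReps (k m : ℕ) : Set (Matrix (Fin 2) (Fin 2) ℝ) :=
  {Q | Q.det = 1 ∧ IsReducedUpper Q ∧ IsIntegerMatrix (Q⁻¹ * !![1, (k : ℝ); 0, 1] * Q) ∧
    IsIntegerMatrix (Q⁻¹ * !![1, 0; (m : ℝ), 1] * Q)}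

theorem exists_mul_toRealMatrix_mem_reducedReps {P : Matrix (Fin 2) (Fin 2) ℝ}
    (hP : P.det = 1) {k m : ℕ} (hk : k ≠ 0)
    (hT : IsIntegerMatrix (P⁻¹ * !![1, (k : ℝ); 0, 1] * P))
    (hL : IsIntegerMatrix (P⁻¹ * !![1, 0; (m : ℝ), 1] * P)) :
    ∃ X : SL(2, ℤ), P * toRealMatrix X ∈ reducedReps k m := by
  obtain ⟨X, hX⟩ := exists_isReducedUpper_mul_toRealMatrix_of_conj_upperUnipotent hP
    (Nat.cast_ne_zero.mpr hk) hT
  exact ⟨X, by rw [det_mul, hP, det_toRealMatrix, one_mul], hX, hT.conj_mul_toRealMatrix X,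
    hL.conj_mul_toRealMatrix X⟩

theorem exists_int_of_mem_reducedReps {k m : ℕ} (hk : 0 < k) (hm : 0 < m)
    {Q : Matrix (Fin 2) (Fin 2) ℝ} (hQ : Q ∈ reducedReps k m) :
    ∃ l i : ℤ, m * Q 0 0 ^ 2 = l ∧ m * Q 0 0 * Q 0 1 = i ∧ 0 ≤ i ∧ i < l ∧ l ≤ m * k := by
  obtain ⟨hdet, ⟨h10, h00, h01, h01'⟩, hT, hL⟩ := hQ
  rw [conj_upperUnipotent_eq hdet] at hT
  rw [conj_lowerUnipotent_eq hdet] at hL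
  obtain ⟨j, hj⟩ := hT 0 1
  obtain ⟨l, hl⟩ := hL 1 0
  obtain ⟨i, hi⟩ := hL 1 1
  simp only [of_apply, cons_val', cons_val_zero, cons_val_one, empty_val',
    cons_val_fin_one] at hj hl hi
  have hdiag := mul_diag_eq_one_of_det_eq_one hdet h10
  have hmR : (0 : ℝ) < m := by exact_mod_cast hm
  have hkR : (0 : ℝ) < k := by exact_mod_cast hk
  have hj0 : 0 < j := by
    have : Q 1 1 ≠ 0 := right_ne_zero_of_mul_eq_one hdiag
    exact_mod_cast hj ▸ (by positivity : (0 : ℝ) < k * Q 1 1 ^ 2)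
  have hlj : l * j = m * k := by
    have : (l : ℝ) * j = m * k := by
      rw [← hl, ← hj]
      linear_combination (m * k * (Q 0 0 * Q 1 1 + 1)) * hdiag
    exact_mod_cast this
  have hi0 : 0 ≤ i - 1 := by
    have : (0 : ℝ) ≤ i - 1 := by rw [← hi]; nlinarith [mul_pos hmR h00]
    exact_mod_cast this
  have hil : i - 1 < l := by
    have : (i : ℝ) - 1 < l := by rw [← hi, ← hl]; nlinarith [mul_pos hmR h00]
    exact_mod_cast this
  exact ⟨l, i - 1, hl, by push_cast; linarith, hi0, hil, by nlinarith⟩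

theorem reducedReps_finite {k m : ℕ} (hk : 0 < k) (hm : 0 < m) :
    (reducedReps k m).Finite := by
  set f : Matrix (Fin 2) (Fin 2) ℝ → ℝ × ℝ := fun Q => (m * Q 0 0 ^ 2, m * Q 0 0 * Q 0 1)
  set box : Finset (ℤ × ℤ) := Finset.Icc 0 (m * k : ℤ) ×ˢ Finset.Icc 0 (m * k : ℤ)
  have himage : f '' reducedReps k m ⊆ (fun p : ℤ × ℤ => ((p.1 : ℝ), (p.2 : ℝ))) '' box := by
    rintro _ ⟨Q, hQ, rfl⟩
    obtain ⟨l, i, hl, hi, hi0, hil, hlk⟩ := exists_int_of_mem_reducedReps hk hm hQ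
    refine ⟨(l, i), Finset.mem_product.mpr ⟨Finset.mem_Icc.mpr ⟨by omega, hlk⟩,
      Finset.mem_Icc.mpr ⟨hi0, by omega⟩⟩, by simp [f, hl, hi]⟩
  refine Set.Finite.of_finite_image ((box.finite_toSet.image _).subset himage) ?_
  rintro Q ⟨hQ, ⟨h10, h00, -⟩, -⟩ Q' ⟨hQ', ⟨h10', h00', -⟩, -⟩ hf
  simp only [f, Prod.mk.injEq] at hf
  have hmR : (m : ℝ) ≠ 0 := by positivity
  have e00 : Q 0 0 = Q' 0 0 :=
    (pow_left_inj₀ h00.le h00'.le two_ne_zero).mp (mul_left_cancel₀ hmR hf.1)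
  have e01 : Q 0 1 = Q' 0 1 := by
    rw [← e00] at hf
    exact mul_left_cancel₀ (mul_ne_zero hmR h00.ne') hf.2
  have e11 : Q 1 1 = Q' 1 1 := mul_left_cancel₀ h00.ne' <| by
    rw [mul_diag_eq_one_of_det_eq_one hQ h10, e00, mul_diag_eq_one_of_det_eq_one hQ' h10']
  rw [eta_fin_two Q, eta_fin_two Q', e00, e01, e11, h10, h10']

/-- For a finite-index subgroup `G ≤ SL₂(ℤ)`, the matrices `P ∈ SL₂(ℝ)` with
`P⁻¹·G·P ⊆ SL₂(ℤ)` fall into finitely many cosets of `SL₂(ℤ)`; i.e. `N(G)` is finite. -/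
theorem stmt_5 (G : Subgroup SL(2, ℤ)) (hG : G.FiniteIndex) :
    ∃ (N : ℕ) (Ps : Fin N → Matrix (Fin 2) (Fin 2) ℝ),
      (∀ j, (Ps j).det = 1) ∧
      ∀ P : Matrix (Fin 2) (Fin 2) ℝ, P.det = 1 →
        (∀ A ∈ G,
          IsIntegerMatrix (P⁻¹ * ((A : Matrix (Fin 2) (Fin 2) ℤ)).map (Int.cast : ℤ → ℝ) * P)) →
        ∃ j : Fin N, ∃ X : SL(2, ℤ),
          P = Ps j * ((X : Matrix (Fin 2) (Fin 2) ℤ)).map (Int.cast : ℤ → ℝ) := by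
  obtain ⟨k, hk, -, hTk⟩ := Subgroup.exists_pow_mem_of_index_ne_zero hG.index_ne_zero T
  obtain ⟨m, hm, -, hLm⟩ :=
    Subgroup.exists_pow_mem_of_index_ne_zero hG.index_ne_zero T.transpose
  obtain ⟨N, Ps, hPs⟩ := (reducedReps_finite hk hm).fin_embedding
  refine ⟨N, Ps, fun j => (hPs.subset ⟨j, rfl⟩).1, fun P hP hPG => ?_⟩
  have hT : IsIntegerMatrix (P⁻¹ * toRealMatrix (T ^ k) * P) := hPG _ hTk
  have hL : IsIntegerMatrix (P⁻¹ * toRealMatrix (T.transpose ^ m) * P) := hPG _ hLm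
  rw [toRealMatrix_T_pow] at hT
  rw [toRealMatrix_transpose_T_pow] at hL
  obtain ⟨X, hX⟩ := exists_mul_toRealMatrix_mem_reducedReps hP hk.ne' hT hL
  obtain ⟨j, hj⟩ := hPs.superset hX
  refine ⟨j, X⁻¹, ?_⟩
  rw [← toRealMatrix_apply, hj, Matrix.mul_assoc, ← map_mul, mul_inv_cancel, map_one,
    Matrix.mul_one]
end

section
/- Let (A_i) be a sequence in SL₂(ℤ) with entries A_i = [[a_i, b_i], [c_i, d_i]], and let (λ_i) be a sequence of positive reals with λ_i → ∞. Set P_i = [[λ_i, 0], [0, λ_i⁻¹]] and suppose the conjugates P_i⁻¹·A_i·P_i = [[a_i, λ_i⁻²·b_i], [λ_i²·c_i, d_i]] converge entrywise to a matrix A. Then: (a) for all sufficiently large i one has c_i = 0 and a_i = d_i ∈ {1, −1}; and (b) there exist ε ∈ {1, −1} and b ∈ ℝ such that A = ε·[[1, b], [0, 1]]. -/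
/-!
The lower-left entries `λ_i² c_i` converge while `λ_i² → ∞`, so the integers `c_i` eventually
vanish. Then `a_i d_i = 1` forces `a_i = d_i = ±1`, and passing to the limit entrywise gives
`A = ±[[1, β], [0, 1]]`.
-/

open Matrix Filter Topology

lemma Int.eventually_eq_zero_of_tendsto_mul {α : Type*} {l : Filter α} {μ : α → ℝ}
    {c : α → ℤ} {x : ℝ} (hμ : Tendsto μ l atTop) (hc : Tendsto (fun i => μ i * c i) l (𝓝 x)) :
    ∀ᶠ i in l, c i = 0 := by
  filter_upwards [hc.abs.eventually_lt_const (lt_add_one |x|),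
    hμ.eventually_gt_atTop (|x| + 1)] with i hbdd hbig
  by_contra hne
  have hc_abs : (1 : ℝ) ≤ |(c i : ℝ)| := by exact_mod_cast Int.one_le_abs hne
  have hμ_pos : 0 < μ i := by linarith [abs_nonneg x]
  rw [abs_mul, abs_of_pos hμ_pos] at hbdd
  linarith [le_mul_of_one_le_right hμ_pos.le hc_abs]

lemma Int.eq_and_eq_one_or_neg_one_of_det_eq_one {a b c d : ℤ} (hdet : a * d - b * c = 1)
    (hc : c = 0) : a = d ∧ (a = 1 ∨ a = -1) := by
  subst hc
  rcases Int.mul_eq_one_iff_eq_one_or_neg_one.mp (by linarith : a * d = 1) with h | h <;> omega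

lemma Matrix.eq_smul_unitriangular_of_fin_two {R : Type*} [CommRing R]
    (A : Matrix (Fin 2) (Fin 2) R) (h10 : A 1 0 = 0) (h11 : A 1 1 = A 0 0)
    (h00 : A 0 0 * A 0 0 = 1) : A = A 0 0 • !![1, A 0 0 * A 0 1; 0, 1] := by
  ext p q
  fin_cases p <;> fin_cases q <;> simp [h10, h11, ← mul_assoc, h00]

lemma Real.mem_one_neg_one_of_tendsto_int {α : Type*} {l : Filter α} [l.NeBot] {a : α → ℤ}
    {x : ℝ} (ha : Tendsto (fun i => (a i : ℝ)) l (𝓝 x)) (h : ∀ᶠ i in l, a i = 1 ∨ a i = -1) :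
    x = 1 ∨ x = -1 :=
  (Set.toFinite ({1, -1} : Set ℝ)).isClosed.mem_of_tendsto ha <|
    h.mono fun i hi => by rcases hi with hi | hi <;> simp [hi]

theorem stmt_7_general (a b c d : ℕ → ℤ) (hdet : ∀ i, a i * d i - b i * c i = 1)
    (lam : ℕ → ℝ) (hlam : Tendsto lam atTop atTop)
    (A : Matrix (Fin 2) (Fin 2) ℝ)
    (hconv : ∀ p q : Fin 2,
      Tendsto (fun i => (!![(a i : ℝ), (lam i)⁻¹ ^ 2 * (b i : ℝ);
        (lam i) ^ 2 * (c i : ℝ), (d i : ℝ)]) p q) atTop (nhds (A p q))) :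
    (∀ᶠ i in atTop, c i = 0 ∧ a i = d i ∧ (a i = 1 ∨ a i = -1)) ∧
    ∃ ε : ℝ, (ε = 1 ∨ ε = -1) ∧ ∃ β : ℝ, A = ε • !![1, β; 0, 1] := by
  have ha : Tendsto (fun i => (a i : ℝ)) atTop (𝓝 (A 0 0)) := by simpa using hconv 0 0
  have hc : Tendsto (fun i => lam i ^ 2 * (c i : ℝ)) atTop (𝓝 (A 1 0)) := by
    simpa using hconv 1 0
  have hd : Tendsto (fun i => (d i : ℝ)) atTop (𝓝 (A 1 1)) := by simpa using hconv 1 1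
  have hc0 : ∀ᶠ i in atTop, c i = 0 :=
    Int.eventually_eq_zero_of_tendsto_mul ((tendsto_pow_atTop two_ne_zero).comp hlam) hc
  have hev : ∀ᶠ i in atTop, c i = 0 ∧ a i = d i ∧ (a i = 1 ∨ a i = -1) :=
    hc0.mono fun i hci => ⟨hci, Int.eq_and_eq_one_or_neg_one_of_det_eq_one (hdet i) hci⟩
  have hA00 : A 0 0 = 1 ∨ A 0 0 = -1 :=
    Real.mem_one_neg_one_of_tendsto_int ha (hev.mono fun _ h => h.2.2)
  have hA10 : A 1 0 = 0 :=
    tendsto_nhds_unique hc (tendsto_const_nhds.congr' (hc0.mono fun i h => by simp [h]))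
  have hA11 : A 1 1 = A 0 0 :=
    tendsto_nhds_unique hd (ha.congr' (hev.mono fun i h => by simp [h.2.1]))
  refine ⟨hev, A 0 0, hA00, A 0 0 * A 0 1, A.eq_smul_unitriangular_of_fin_two hA10 hA11 ?_⟩
  rcases hA00 with h | h <;> simp [h]

/-- If `A_i = [[a_i, b_i], [c_i, d_i]] ∈ SL₂(ℤ)`, `λ_i → ∞`, and the conjugates
`P_i⁻¹·A_i·P_i = [[a_i, λ_i⁻²b_i], [λ_i²c_i, d_i]]` converge entrywise to `A`, then
eventually `c_i = 0` and `a_i = d_i = ±1`, and `A = ±[[1, b], [0, 1]]`. -/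
theorem stmt_7 (a b c d : ℕ → ℤ) (hdet : ∀ i, a i * d i - b i * c i = 1)
    (lam : ℕ → ℝ) (hpos : ∀ i, 0 < lam i) (hlam : Tendsto lam atTop atTop)
    (A : Matrix (Fin 2) (Fin 2) ℝ)
    (hconv : ∀ p q : Fin 2,
      Tendsto (fun i => (!![(a i : ℝ), (lam i)⁻¹ ^ 2 * (b i : ℝ);
        (lam i) ^ 2 * (c i : ℝ), (d i : ℝ)]) p q) atTop (nhds (A p q))) :
    (∀ᶠ i in atTop, c i = 0 ∧ a i = d i ∧ (a i = 1 ∨ a i = -1)) ∧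
    ∃ ε : ℝ, (ε = 1 ∨ ε = -1) ∧ ∃ β : ℝ, A = ε • !![1, β; 0, 1] :=
  stmt_7_general a b c d hdet lam hlam A hconv
end

section
/- Let D ⊆ ℂ be a nonempty connected open set, and let τ, h : D → ℂ be holomorphic functions such that Im τ(z) > 0 for all z ∈ D, h(z) ≠ 0 for all z ∈ D, and the derivative h′ is not identically zero on D. If the real-valued function z ↦ Im(τ(z))/|h(z)|² is harmonic on D (its Laplacian vanishes identically), then there exist a real number r and a nonzero complex number c such that h(z) = c·(τ(z) − r) for all z ∈ D. -/
/-!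
With `f = τ / h` and `g = 1 / h` we have `Im τ / |h|² = Im (f · conj g)`, whose Laplacian is
`4 Im (f' · conj g')`, a positive multiple of `Im (τ - τ' h / h')` wherever `h' ≠ 0`. So near a
point where `h' ≠ 0` the holomorphic function `τ - τ' h / h'` is real-valued, hence, by the open
mapping theorem, equal to a real constant `ρ`. The identity theorem extends `h' (τ - ρ) = τ' h`
to all of `D`: `h` and `τ - ρ` (which has no zeros since `Im τ > 0`) have the same logarithmic
derivative, so they are proportional on the connected set `D`.
-/

open Complex

/-- The Laplacian `∂²u/∂x² + ∂²u/∂y²` of a function `u : ℂ → ℝ`. -/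
noncomputable def laplacian (u : ℂ → ℝ) (z : ℂ) : ℝ :=
  fderiv ℝ (fun w => fderiv ℝ u w 1) z 1 +
    fderiv ℝ (fun w => fderiv ℝ u w Complex.I) z Complex.I

open ComplexConjugate Topology Set

section ImMulConj

variable {f g : ℂ → ℂ} {a b z : ℂ}

theorem differentiableAt_im_mul_conj (hf : DifferentiableAt ℂ f z) (hg : DifferentiableAt ℂ g z) :
    DifferentiableAt ℝ (fun w => (f w * conj (g w)).im) z := by
  have hf' := hf.restrictScalars ℝ
  have hg' := hg.restrictScalars ℝ
  fun_prop

theorem fderiv_im_mul_conj_apply (hf : HasDerivAt f a z) (hg : HasDerivAt g b z) (v : ℂ) :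
    fderiv ℝ (fun w => (f w * conj (g w)).im) z v
      = (a * v * conj (g z) + f z * conj (b * v)).im := by
  have hd : HasFDerivAt (fun w => (f w * conj (g w)).im) _ z := imCLM.hasFDerivAt.comp z
    (hf.complexToReal_fderiv.mul' (conjCLE.hasFDerivAt.comp z hg.complexToReal_fderiv))
  rw [hd.fderiv]
  simp only [ContinuousLinearMap.comp_apply, add_apply, smul_apply, one_apply_eq_self,
    smul_eq_mul, imCLM_apply, ContinuousLinearEquiv.coe_coe, ContinuousAlgEquiv.coeCLE_apply,
    conjCAE_apply, op_smul_eq_smul, Function.comp_apply]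
  ring_nf

theorem fderiv_fderiv_im_mul_conj_apply (hf : AnalyticAt ℂ f z) (hg : AnalyticAt ℂ g z) (v : ℂ) :
    fderiv ℝ (fun w => fderiv ℝ (fun w => (f w * conj (g w)).im) w v) z v
      = (v * v * deriv (deriv f) z * conj (g z) + 2 * (v * deriv f z * conj (v * deriv g z))
          + f z * conj (v * v * deriv (deriv g) z)).im := by
  have hf₂ := (hf.deriv.differentiableAt.hasDerivAt).const_mul v
  have hg₂ := (hg.deriv.differentiableAt.hasDerivAt).const_mul v
  have hf₁ := hf.differentiableAt.hasDerivAt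
  have hg₁ := hg.differentiableAt.hasDerivAt
  have hfirst : (fun w => fderiv ℝ (fun w => (f w * conj (g w)).im) w v) =ᶠ[𝓝 z]
      fun w => (v * deriv f w * conj (g w)).im + (f w * conj (v * deriv g w)).im := by
    filter_upwards [hf.eventually_analyticAt, hg.eventually_analyticAt] with w hfw hgw
    rw [fderiv_im_mul_conj_apply hfw.differentiableAt.hasDerivAt hgw.differentiableAt.hasDerivAt,
      ← add_im]
    ring_nf
  rw [hfirst.fderiv_eq, fderiv_fun_add (differentiableAt_im_mul_conj hf₂.differentiableAt
      hg.differentiableAt) (differentiableAt_im_mul_conj hf.differentiableAt hg₂.differentiableAt),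
    add_apply, fderiv_im_mul_conj_apply hf₂ hg₁,
    fderiv_im_mul_conj_apply hf₁ hg₂, ← add_im]
  ring_nf

theorem laplacian_im_mul_conj (hf : AnalyticAt ℂ f z) (hg : AnalyticAt ℂ g z) :
    laplacian (fun w => (f w * conj (g w)).im) z = 4 * (deriv f z * conj (deriv g z)).im := by
  rw [laplacian, fderiv_fderiv_im_mul_conj_apply hf hg, fderiv_fderiv_im_mul_conj_apply hf hg,
    ← add_im, ← im_ofReal_mul]
  congr 1
  simp only [map_mul, map_one, conj_I]
  push_cast
  linear_combination (deriv (deriv f) z * conj (g z) + f z * conj (deriv (deriv g) z)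
    - 2 * deriv f z * conj (deriv g z)) * I_sq

end ImMulConj

theorem im_div_sq_norm_eq_im_mul_conj (a b : ℂ) : a.im / ‖b‖ ^ 2 = (a * b⁻¹ * conj b⁻¹).im := by
  rw [mul_assoc, mul_conj, normSq_inv, Complex.sq_norm, im_mul_ofReal, div_eq_mul_inv]

theorem im_sub_deriv_mul_div_deriv_eq_zero_of_laplacian {τ h : ℂ → ℂ} {z : ℂ} (hτ : AnalyticAt ℂ τ z)
    (hh : AnalyticAt ℂ h z) (hz : h z ≠ 0) (hz' : deriv h z ≠ 0)
    (hharm : laplacian (fun w => (τ w).im / ‖h w‖ ^ 2) z = 0) :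
    (τ z - deriv τ z * h z / deriv h z).im = 0 := by
  have hinv : AnalyticAt ℂ (fun w => (h w)⁻¹) z := hh.inv hz
  simp only [im_div_sq_norm_eq_im_mul_conj] at hharm
  rw [laplacian_im_mul_conj (hτ.fun_mul hinv) hinv] at hharm
  have hg' : HasDerivAt (fun w => (h w)⁻¹) (-deriv h z / h z ^ 2) z :=
    hh.differentiableAt.hasDerivAt.inv hz
  rw [(hτ.differentiableAt.hasDerivAt.fun_mul hg').deriv, hg'.deriv] at hharm
  have hfactor : (deriv τ z * (h z)⁻¹ + τ z * (-deriv h z / h z ^ 2)) * conj (-deriv h z / h z ^ 2)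
      = (τ z - deriv τ z * h z / deriv h z) * (normSq (deriv h z) / normSq (h z) ^ 2 : ℝ) := by
    push_cast
    rw [← mul_conj, ← mul_conj]
    simp only [map_div₀, map_neg, map_pow]
    field_simp
    ring
  rw [hfactor, im_mul_ofReal] at hharm
  simpa [hz, hz'] using hharm

section

variable {E : Type*} [NormedAddCommGroup E] [NormedSpace ℂ E]

theorem AnalyticAt.eventually_eq_re_of_eventually_im_eq_zero {g : E → ℂ} {z₀ : E}
    (hg : AnalyticAt ℂ g z₀) (him : ∀ᶠ z in 𝓝 z₀, (g z).im = 0) :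
    ∀ᶠ z in 𝓝 z₀, g z = (g z₀).re := by
  have hz₀ : g z₀ = (g z₀).re := ext rfl him.self_of_nhds
  rw [← hz₀]
  refine hg.eventually_constant_or_nhds_le_map_nhds.resolve_right fun hopen => ?_
  have hle : {w : ℂ | w.im ≤ 0} ∈ 𝓝 (g z₀) := hopen (him.mono fun _ hz => hz.le)
  have hlt : (g z₀).im < 0 := by
    simpa [interior_setOfPred_im_le] using mem_interior_iff_mem_nhds.mpr hle
  exact hlt.ne him.self_of_nhds

end

/-- If `τ, h` are holomorphic on a nonempty connected open set `D`, with `Im τ > 0`,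
`h ≠ 0`, `h'` not identically zero, and `Im(τ)/|h|²` harmonic, then `h = c(τ − r)`
for some `r ∈ ℝ` and `c ∈ ℂ \ {0}`. -/
theorem stmt_9 (D : Set ℂ) (hD : IsOpen D) (hconn : IsConnected D)
    (τ h : ℂ → ℂ) (hτ : DifferentiableOn ℂ τ D) (hh : DifferentiableOn ℂ h D)
    (hτim : ∀ z ∈ D, 0 < (τ z).im) (hh0 : ∀ z ∈ D, h z ≠ 0)
    (hh' : ¬ ∀ z ∈ D, deriv h z = 0)
    (hharm : ∀ z ∈ D, laplacian (fun w => (τ w).im / ‖h w‖ ^ 2) z = 0) :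
    ∃ (r : ℝ) (c : ℂ), c ≠ 0 ∧ ∀ z ∈ D, h z = c * (τ z - (r : ℂ)) := by
  have hτa := hτ.analyticOnNhd hD
  have hha := hh.analyticOnNhd hD
  obtain ⟨z₀, hz₀, hz₀'⟩ : ∃ z₀ ∈ D, deriv h z₀ ≠ 0 := by simpa using hh'
  have hnear : ∀ᶠ z in 𝓝 z₀, z ∈ D ∧ deriv h z ≠ 0 :=
    (hD.eventually_mem hz₀).and ((hha.deriv z₀ hz₀).continuousAt.eventually_ne hz₀')
  have hGa : AnalyticAt ℂ (fun z => τ z - deriv τ z * h z / deriv h z) z₀ :=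
    (hτa z₀ hz₀).sub (((hτa.deriv z₀ hz₀).mul (hha z₀ hz₀)).div (hha.deriv z₀ hz₀) hz₀')
  obtain ⟨ρ, hG⟩ : ∃ ρ : ℝ, ∀ᶠ z in 𝓝 z₀, τ z - deriv τ z * h z / deriv h z = ρ :=
    ⟨_, hGa.eventually_eq_re_of_eventually_im_eq_zero <| hnear.mono fun z ⟨hz, hz'⟩ =>
      im_sub_deriv_mul_div_deriv_eq_zero_of_laplacian (hτa z hz) (hha z hz) (hh0 z hz) hz'
        (hharm z hz)⟩
  have hode : EqOn (fun z => deriv h z * (τ z - ρ)) (fun z => deriv τ z * h z) D :=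
    (hha.deriv.mul (hτa.sub analyticOnNhd_const)).eqOn_of_preconnected_of_eventuallyEq
      (hτa.deriv.mul hha) hconn.isPreconnected hz₀ <| (hG.and hnear).mono
        fun z ⟨hGz, _, hz'⟩ => by
          change deriv h z * (τ z - ρ) = deriv τ z * h z
          rw [← hGz]
          field_simp
          ring
  have hτρ : ∀ z ∈ D, τ z - ρ ≠ 0 := fun z hz =>
    ne_of_apply_ne im (by simpa using (hτim z hz).ne')
  have hlog : EqOn (logDeriv h) (logDeriv fun z => τ z - ρ) D := fun z hz => by
    rw [logDeriv_apply, logDeriv_apply, deriv_sub_const, div_eq_div_iff (hh0 z hz) (hτρ z hz)]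
    exact hode hz
  obtain ⟨c, hc0, hc⟩ :=
    (logDeriv_eqOn_iff hh (hτ.sub_const _) hD hconn.isPreconnected hτρ hh0).mp hlog
  exact ⟨ρ, c, hc0, fun z hz => hc hz⟩
end

section
/- Let D ⊆ ℂ be a nonempty connected open set. For j = 1, 2, let f_j, g_j : D → ℂ be holomorphic functions with f_j nowhere vanishing and Im(g_j(z)/f_j(z)) > 0 for all z ∈ D. Suppose the two induced metrics agree, i.e., Im(g₁(z)/f₁(z))·|f₁(z)|² = Im(g₂(z)/f₂(z))·|f₂(z)|² for all z ∈ D. Then there exist θ ∈ ℝ and a matrix [[a, b], [c, d]] ∈ SL₂(ℝ) such that f₂ = e^{iθ}·(a·f₁ + c·g₁) and g₂ = e^{iθ}·(b·f₁ + d·g₁) on D. (This is the coordinate form of the statement that two special Kähler structures on a Riemann surface are isometric if and only if they are related by a twist.) -/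
/-!
Write `F = (f, g)` and `herm u v = v̄ᵀ J u` with `J = [[0, 1], [-1, 0]]`, so that the metric of a
special pair is `herm F F / 2i`. Since `F₁, F₂` are holomorphic, `herm (F z) (F w)` is holomorphic in
`z` and antiholomorphic in `w`; equality on the diagonal therefore propagates to all mixed
derivatives, so the Taylor coefficients `aₘ = F₁⁽ᵐ⁾(z₀)`, `bₘ = F₂⁽ᵐ⁾(z₀)` have the same Gram
matrices for `herm`. As `herm a₀ a₀ ≠ 0`, a Witt-type argument in `ℂ²` gives a `herm`-unitary `T`
with `T aₘ = bₘ` for all `m`, and the identity theorem gives `F₂ = T F₁` on `D`. Finally, since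
`Mᵀ J M = det M • J` for every `2 × 2` matrix, the unitary group of `herm` consists of the matrices
`e^{iθ} M` with `M ∈ SL₂(ℝ)`.
-/

open Complex ComplexConjugate Filter Matrix Set Topology

lemma im_div_mul_norm_sq (f g : ℂ) : (g / f).im * ‖f‖ ^ 2 = (g * conj f).im := by
  rcases eq_or_ne f 0 with rfl | hf
  · simp
  rw [Complex.sq_norm, div_im, mul_im, conj_re, conj_im]
  field_simp [normSq_eq_zero.not.2 hf]
  ring

lemma eq_zero_of_forall_mul_add_conj_mul_eq_zero {A B : ℂ} (h : ∀ v : ℂ, v * A + conj v * B = 0) :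
    A = 0 ∧ B = 0 := by
  have h₁ := h 1
  have hI := h I
  simp only [map_one, conj_I] at h₁ hI
  constructor
  · linear_combination (h₁ - I * hI) / 2 + (A - B) / 2 * I_mul_I
  · linear_combination (h₁ + I * hI) / 2 - (A - B) / 2 * I_mul_I

lemma conj_exp_ofReal_mul_I (θ : ℝ) : conj (exp (θ * I)) = (exp (θ * I))⁻¹ := by
  rw [← Complex.exp_conj, ← exp_neg, map_mul, conj_ofReal, conj_I, mul_neg]

lemma exp_arg_div_two_mul_self {δ : ℂ} (hδ : ‖δ‖ = 1) :
    exp ((δ.arg / 2 : ℝ) * I) * exp ((δ.arg / 2 : ℝ) * I) = δ := by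
  have h : ((δ.arg / 2 : ℝ) : ℂ) * I + ((δ.arg / 2 : ℝ) : ℂ) * I = δ.arg * I := by
    push_cast
    ring
  rw [← exp_add, h]
  simpa [hδ] using norm_mul_exp_arg_mul_I δ

lemma ofReal_re_inv_mul {E δ X : ℂ} (hE : E * E = δ) (hEconj : conj E = E⁻¹)
    (hX : conj X = conj δ * X) : ((E⁻¹ * X).re : ℂ) = E⁻¹ * X := by
  rcases eq_or_ne E 0 with rfl | hE0
  · simp
  rw [← conj_eq_iff_re, map_mul, map_inv₀, hEconj, inv_inv, hX, ← hE, map_mul, hEconj]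
  field_simp

lemma AnalyticOnNhd.hasDerivAt_iteratedDeriv {𝕜 E : Type*} [NontriviallyNormedField 𝕜]
    [NormedAddCommGroup E] [NormedSpace 𝕜 E] [CompleteSpace E] {F : 𝕜 → E} {D : Set 𝕜}
    (hF : AnalyticOnNhd 𝕜 F D) {z : 𝕜} (hz : z ∈ D) (n : ℕ) :
    HasDerivAt (iteratedDeriv n F) (iteratedDeriv (n + 1) F z) z := by
  rw [iteratedDeriv_succ, iteratedDeriv_eq_iterate]
  exact (hF.iterated_deriv n z hz).differentiableAt.hasDerivAt

theorem eqOn_comp_of_iteratedDeriv_eq {E E' : Type*} [NormedAddCommGroup E] [NormedSpace ℂ E]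
    [CompleteSpace E] [NormedAddCommGroup E'] [NormedSpace ℂ E'] [CompleteSpace E']
    {D : Set ℂ} (hD : IsOpen D) (hconn : IsPreconnected D) {F : ℂ → E} {G : ℂ → E'}
    (hF : AnalyticOnNhd ℂ F D) (hG : AnalyticOnNhd ℂ G D) (L : E →L[ℂ] E') {z₀ : ℂ}
    (hz₀ : z₀ ∈ D) (h : ∀ n, iteratedDeriv n G z₀ = L (iteratedDeriv n F z₀)) :
    EqOn G (L ∘ F) D := by
  obtain ⟨r, hr, hball⟩ := Metric.isOpen_iff.1 hD z₀ hz₀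
  refine hG.eqOn_of_preconnected_of_eventuallyEq (L.comp_analyticOnNhd hF) hconn hz₀ ?_
  filter_upwards [Metric.ball_mem_nhds z₀ hr] with z hz
  have hFz := (Complex.hasSum_taylorSeries_on_ball (hF.differentiableOn.mono hball) hz).mapL L
  have hGz := Complex.hasSum_taylorSeries_on_ball (hG.differentiableOn.mono hball) hz
  simp only [map_smul, ← h] at hFz
  exact hGz.unique hFz

namespace SpecialPair

def J : Matrix (Fin 2) (Fin 2) ℂ := !![0, 1; -1, 0]

def herm (u v : Fin 2 → ℂ) : ℂ := star v ⬝ᵥ (J *ᵥ u)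

def frame (u v : Fin 2 → ℂ) : Matrix (Fin 2) (Fin 2) ℂ := (Matrix.of ![u, v])ᵀ

lemma herm_apply (u v : Fin 2 → ℂ) : herm u v = u 1 * conj (v 0) - conj (v 1) * u 0 := by
  simp [herm, J, dotProduct, mulVec, Fin.sum_univ_two]
  ring

lemma herm_sub_left (u v w : Fin 2 → ℂ) : herm (u - v) w = herm u w - herm v w := by
  simp only [herm, mulVec_sub, dotProduct_sub]

lemma herm_smul_left (c : ℂ) (u v : Fin 2 → ℂ) : herm (c • u) v = c * herm u v := by
  simp only [herm, mulVec_smul, dotProduct_smul, smul_eq_mul]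

lemma herm_smul_right (c : ℂ) (u v : Fin 2 → ℂ) : herm u (c • v) = conj c * herm u v := by
  simp only [herm_apply, Pi.smul_apply, smul_eq_mul, map_mul]
  ring

lemma herm_mulVec_mulVec {T : Matrix (Fin 2) (Fin 2) ℂ} (hT : Tᴴ * J * T = J)
    (u v : Fin 2 → ℂ) : herm (T *ᵥ u) (T *ᵥ v) = herm u v := by
  rw [herm, herm, star_mulVec, mulVec_mulVec, dotProduct_mulVec, vecMul_vecMul,
    ← dotProduct_mulVec, ← Matrix.mul_assoc, hT]

lemma herm_self_star (u : Fin 2 → ℂ) : herm u (star u) = 0 := by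
  simp [herm_apply]

lemma herm_star_self (u : Fin 2 → ℂ) : herm (star u) u = 0 := by
  simp [herm_apply]

lemma herm_star_star (u : Fin 2 → ℂ) : herm (star u) (star u) = -herm u u := by
  simp [herm_apply]

lemma det_frame (u v : Fin 2 → ℂ) : (frame u v).det = u 0 * v 1 - u 1 * v 0 := by
  simp [frame, det_fin_two]

lemma herm_star_right (u w : Fin 2 → ℂ) : herm u (star w) = (frame w u).det := by
  simp [herm_apply, det_frame]
  ring

lemma det_frame_star (u : Fin 2 → ℂ) : (frame u (star u)).det = -herm u u := by
  simp [herm_apply, det_frame]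
  ring

lemma frame_gram (u v : Fin 2 → ℂ) :
    (frame u v)ᴴ * J * frame u v = !![herm u u, herm v u; herm u v, herm v v] := by
  ext i j
  fin_cases i <;> fin_cases j <;>
    simp [frame, J, herm_apply, Matrix.mul_apply, Fin.sum_univ_two] <;> ring

lemma mul_frame (T : Matrix (Fin 2) (Fin 2) ℂ) (u v : Fin 2 → ℂ) :
    T * frame u v = frame (T *ᵥ u) (T *ᵥ v) := by
  ext i j
  fin_cases i <;> fin_cases j <;> simp [frame, Matrix.mul_apply]

lemma gram_det (u v : Fin 2 → ℂ) :
    herm u v * herm v u - herm u u * herm v v = -((frame u v).det * conj (frame u v).det) := by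
  simp only [herm_apply, det_frame, map_sub, map_mul]
  ring

lemma eq_zero_of_herm_eq_zero {v₀ v₁ c : Fin 2 → ℂ} (hv : (frame v₀ v₁).det ≠ 0)
    (h₀ : herm c v₀ = 0) (h₁ : herm c v₁ = 0) : c = 0 := by
  have hv' : conj (frame v₀ v₁).det ≠ 0 := (map_ne_zero _).2 hv
  rw [herm_apply] at h₀ h₁
  have hc₀ : c 0 * conj (frame v₀ v₁).det = 0 := by
    rw [det_frame, map_sub, map_mul, map_mul]
    linear_combination conj (v₁ 0) * h₀ - conj (v₀ 0) * h₁
  have hc₁ : c 1 * conj (frame v₀ v₁).det = 0 := by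
    rw [det_frame, map_sub, map_mul, map_mul]
    linear_combination conj (v₁ 1) * h₀ - conj (v₀ 1) * h₁
  ext i
  fin_cases i
  · exact (mul_eq_zero.1 hc₀).resolve_right hv'
  · exact (mul_eq_zero.1 hc₁).resolve_right hv'

lemma herm_sub_mulVec {T : Matrix (Fin 2) (Fin 2) ℂ} (hT : Tᴴ * J * T = J)
    {u v : Fin 2 → ℂ} (huv : T *ᵥ u = v) (a b : Fin 2 → ℂ) :
    herm (b - T *ᵥ a) v = herm b v - herm a u := by
  rw [herm_sub_left, ← huv, herm_mulVec_mulVec hT]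

lemma exists_unitary_mulVec_frame {u₀ u₁ v₀ v₁ : Fin 2 → ℂ} (hu : (frame u₀ u₁).det ≠ 0)
    (hgram : (frame u₀ u₁)ᴴ * J * frame u₀ u₁ = (frame v₀ v₁)ᴴ * J * frame v₀ v₁) :
    ∃ T : Matrix (Fin 2) (Fin 2) ℂ, Tᴴ * J * T = J ∧ T *ᵥ u₀ = v₀ ∧ T *ᵥ u₁ = v₁ := by
  set U := frame u₀ u₁
  set V := frame v₀ v₁
  have hUU : U * U⁻¹ = 1 := mul_nonsing_inv U hu.isUnit
  refine ⟨V * U⁻¹, ?_, ?_⟩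
  · calc (V * U⁻¹)ᴴ * J * (V * U⁻¹) = (U⁻¹)ᴴ * (Vᴴ * J * V) * U⁻¹ := by
          simp only [conjTranspose_mul, Matrix.mul_assoc]
      _ = (U * U⁻¹)ᴴ * J * (U * U⁻¹) := by
          rw [← hgram]; simp only [conjTranspose_mul, Matrix.mul_assoc]
      _ = J := by rw [hUU, conjTranspose_one, Matrix.one_mul, Matrix.mul_one]
  · have h : frame ((V * U⁻¹) *ᵥ u₀) ((V * U⁻¹) *ᵥ u₁) = frame v₀ v₁ := by
      rw [← mul_frame, Matrix.mul_assoc, nonsing_inv_mul U hu.isUnit, Matrix.mul_one]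
    exact ⟨funext fun i => congrFun (congrFun h i) 0, funext fun i => congrFun (congrFun h i) 1⟩

theorem exists_unitary_mulVec_eq (a b : ℕ → Fin 2 → ℂ)
    (hgram : ∀ m n, herm (a m) (a n) = herm (b m) (b n)) (h₀ : herm (a 0) (a 0) ≠ 0) :
    ∃ T : Matrix (Fin 2) (Fin 2) ℂ, Tᴴ * J * T = J ∧ ∀ m, T *ᵥ a m = b m := by
  have hdet : ∀ m, (frame (b 0) (b m)).det * conj (frame (b 0) (b m)).det
      = (frame (a 0) (a m)).det * conj (frame (a 0) (a m)).det := by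
    intro m
    rw [← neg_inj, ← gram_det, ← gram_det, hgram, hgram, hgram, hgram]
  by_cases hspan : ∃ k, (frame (a 0) (a k)).det ≠ 0
  · obtain ⟨k, hk⟩ := hspan
    have hbk : (frame (b 0) (b k)).det ≠ 0 := by
      intro h
      have := hdet k
      rw [h, zero_mul] at this
      exact hk (by simpa using this.symm)
    obtain ⟨T, hT, hT₀, hTk⟩ := exists_unitary_mulVec_frame (v₀ := b 0) (v₁ := b k) hk
      (by simp only [frame_gram, hgram])
    refine ⟨T, hT, fun m => (sub_eq_zero.1 (eq_zero_of_herm_eq_zero hbk ?_ ?_)).symm⟩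
    · rw [herm_sub_mulVec hT hT₀, hgram, sub_self]
    · rw [herm_sub_mulVec hT hTk, hgram, sub_self]
  · -- All `aₘ` are proportional to `a₀`, and `(a₀, ā₀)` is a `herm`-orthogonal frame.
    push Not at hspan
    have hb₀ : (frame (b 0) (star (b 0))).det ≠ 0 := by
      rwa [det_frame_star, neg_ne_zero, ← hgram]
    obtain ⟨T, hT, hT₀, hT₁⟩ := exists_unitary_mulVec_frame (v₀ := b 0) (v₁ := star (b 0))
      (by rwa [det_frame_star, neg_ne_zero] : (frame (a 0) (star (a 0))).det ≠ 0)
      (by rw [frame_gram, frame_gram, herm_self_star, herm_self_star, herm_star_self,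
        herm_star_self, herm_star_star, herm_star_star, hgram])
    refine ⟨T, hT, fun m => (sub_eq_zero.1 (eq_zero_of_herm_eq_zero hb₀ ?_ ?_)).symm⟩
    · rw [herm_sub_mulVec hT hT₀, hgram, sub_self]
    · have hbm : (frame (b 0) (b m)).det = 0 := by
        have := hdet m
        rw [hspan m, zero_mul] at this
        simpa using this
      rw [herm_sub_mulVec hT hT₁, herm_star_right, herm_star_right, hbm, hspan m, sub_self]

lemma det_J : J.det = 1 := by simp [J, det_fin_two]

lemma transpose_mul_J_mul (A : Matrix (Fin 2) (Fin 2) ℂ) : Aᵀ * J * A = A.det • J := by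
  ext i j
  fin_cases i <;> fin_cases j <;> simp [J, Matrix.mul_apply, det_fin_two] <;> ring

lemma map_conj_eq_smul_of_unitary {T : Matrix (Fin 2) (Fin 2) ℂ} (hT : Tᴴ * J * T = J) :
    conj T.det * T.det = 1 ∧ T.map conj = conj T.det • T := by
  have hdet : conj T.det * T.det = 1 := by
    simpa [det_J, det_conjTranspose] using congrArg det hT
  have hJT : IsUnit (J * T) := by
    rw [isUnit_iff_isUnit_det, det_mul, det_J, one_mul]
    exact isUnit_iff_ne_zero.2 (right_ne_zero_of_mul_eq_one hdet)
  -- `Tᵀ J T = det T • J = det T • Tᴴ J T`, and `J T` is invertible.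
  have htr : Tᵀ = T.det • Tᴴ := by
    refine (hJT.mul_left_inj).1 ?_
    rw [← Matrix.mul_assoc, transpose_mul_J_mul, Matrix.smul_mul, ← Matrix.mul_assoc, hT]
  refine ⟨hdet, ?_⟩
  ext i j
  have hij : T i j = T.det * conj (T i j) := by simpa using congrFun (congrFun htr j) i
  simp only [map_apply, Matrix.smul_apply, smul_eq_mul]
  conv_rhs => rw [hij]
  rw [← mul_assoc, hdet, one_mul]

theorem exists_exp_smul_real_of_unitary {T : Matrix (Fin 2) (Fin 2) ℂ} (hT : Tᴴ * J * T = J) :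
    ∃ (θ : ℝ) (M : Matrix (Fin 2) (Fin 2) ℝ),
      M.det = 1 ∧ T = exp (θ * I) • M.map ((↑) : ℝ → ℂ) := by
  obtain ⟨hdet, hconj⟩ := map_conj_eq_smul_of_unitary hT
  have hnorm : ‖T.det‖ = 1 := by
    rw [← pow_eq_one_iff_of_nonneg (norm_nonneg _) two_ne_zero, Complex.sq_norm]
    exact_mod_cast normSq_eq_conj_mul_self.trans hdet
  set E := exp ((T.det.arg / 2 : ℝ) * I)
  have hE : E * E = T.det := exp_arg_div_two_mul_self hnorm
  have hE0 : E ≠ 0 := exp_ne_zero _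
  have hreal : ∀ i j, ((E⁻¹ * T i j).re : ℂ) = E⁻¹ * T i j := fun i j =>
    ofReal_re_inv_mul hE (conj_exp_ofReal_mul_I _) (by simpa using congrFun (congrFun hconj i) j)
  set M := (E⁻¹ • T).map re
  have hTM : T = E • M.map ((↑) : ℝ → ℂ) := by
    ext i j
    simp only [M, map_apply, Matrix.smul_apply, smul_eq_mul, hreal]
    field_simp
  refine ⟨T.det.arg / 2, M, ?_, hTM⟩
  have hdetM : (M.map ((↑) : ℝ → ℂ)).det = M.det := (ofRealHom.map_det M).symm
  have h := congrArg det hTM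
  rw [det_smul, Fintype.card_fin, hdetM, ← hE, sq] at h
  exact_mod_cast (mul_eq_left₀ (mul_ne_zero hE0 hE0)).1 h.symm

lemma herm_pair_self (f g : ℂ) :
    herm ![f, g] ![f, g] = (2 * ((g / f).im * ‖f‖ ^ 2) : ℝ) * I := by
  rw [im_div_mul_norm_sq, ← sub_conj]
  simp [herm_apply]

lemma herm_pair_self_ne_zero {f g : ℂ} (h : 0 < (g / f).im) : herm ![f, g] ![f, g] ≠ 0 := by
  have hf : f ≠ 0 := by
    rintro rfl
    simp at h
  rw [herm_pair_self]
  exact mul_ne_zero (ofReal_ne_zero.2 (by positivity)) I_ne_zero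

lemma hasDerivAt_herm {P Q : ℝ → Fin 2 → ℂ} {P' Q' : Fin 2 → ℂ} {t : ℝ}
    (hP : HasDerivAt P P' t) (hQ : HasDerivAt Q Q' t) :
    HasDerivAt (fun s => herm (P s) (Q s)) (herm P' (Q t) + herm (P t) Q') t := by
  have hPi := hasDerivAt_pi.1 hP
  have hQi (i : Fin 2) : HasDerivAt (fun s => conj (Q s i)) (conj (Q' i)) t :=
    (hasDerivAt_pi.1 hQ i).star
  simp only [herm_apply]
  exact (((hPi 1).fun_mul (hQi 0)).fun_sub ((hQi 1).fun_mul (hPi 0))).congr_deriv (by ring)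

lemma hasDerivAt_herm_line {X Y : ℂ → Fin 2 → ℂ} {X' Y' : Fin 2 → ℂ} {z : ℂ}
    (hX : HasDerivAt X X' z) (hY : HasDerivAt Y Y' z) (v : ℂ) :
    HasDerivAt (fun t : ℝ => herm (X (z + t * v)) (Y (z + t * v)))
      (v * herm X' (Y z) + conj v * herm (X z) Y') 0 := by
  have hline : HasDerivAt (fun t : ℝ => z + t * v) v 0 := by
    simpa using (((hasDerivAt_id (0 : ℝ)).ofReal_comp).mul_const v).const_add z
  have h := hasDerivAt_herm (hX.scomp_of_eq 0 hline (by simp)) (hY.scomp_of_eq 0 hline (by simp))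
  simpa [herm_smul_left, herm_smul_right] using h

lemma herm_deriv_eq_of_eventually_herm_eq {X₁ Y₁ X₂ Y₂ : ℂ → Fin 2 → ℂ}
    {X₁' Y₁' X₂' Y₂' : Fin 2 → ℂ} {z : ℂ} (hX₁ : HasDerivAt X₁ X₁' z) (hY₁ : HasDerivAt Y₁ Y₁' z)
    (hX₂ : HasDerivAt X₂ X₂' z) (hY₂ : HasDerivAt Y₂ Y₂' z)
    (h : ∀ᶠ y in 𝓝 z, herm (X₁ y) (Y₁ y) = herm (X₂ y) (Y₂ y)) :
    herm X₁' (Y₁ z) = herm X₂' (Y₂ z) ∧ herm (X₁ z) Y₁' = herm (X₂ z) Y₂' := by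
  suffices h0 : herm X₁' (Y₁ z) - herm X₂' (Y₂ z) = 0 ∧ herm (X₁ z) Y₁' - herm (X₂ z) Y₂' = 0 from
    ⟨sub_eq_zero.1 h0.1, sub_eq_zero.1 h0.2⟩
  -- Along the real line through `z` in direction `v`, the derivative of the difference is
  -- `v * (∂-part) + v̄ * (∂̄-part)`, and it vanishes for every `v`.
  refine eq_zero_of_forall_mul_add_conj_mul_eq_zero fun v => ?_
  have hline : Tendsto (fun t : ℝ => z + t * v) (𝓝 0) (𝓝 z) := by
    have : Continuous (fun t : ℝ => z + t * v) := by fun_prop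
    simpa using this.tendsto 0
  have hconst : (fun t : ℝ => herm (X₁ (z + t * v)) (Y₁ (z + t * v))
      - herm (X₂ (z + t * v)) (Y₂ (z + t * v))) =ᶠ[𝓝 0] fun _ => 0 :=
    (hline.eventually h).mono fun t ht => sub_eq_zero.2 ht
  have hderiv := ((hasDerivAt_herm_line hX₁ hY₁ v).sub (hasDerivAt_herm_line hX₂ hY₂ v)).unique
    ((hasDerivAt_const (0 : ℝ) (0 : ℂ)).congr_of_eventuallyEq hconst)
  linear_combination hderiv

theorem herm_iteratedDeriv_eq {D : Set ℂ} (hD : IsOpen D) {F₁ F₂ : ℂ → Fin 2 → ℂ}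
    (hF₁ : AnalyticOnNhd ℂ F₁ D) (hF₂ : AnalyticOnNhd ℂ F₂ D)
    (h : ∀ z ∈ D, herm (F₁ z) (F₁ z) = herm (F₂ z) (F₂ z)) (m n : ℕ) :
    ∀ z ∈ D, herm (iteratedDeriv m F₁ z) (iteratedDeriv n F₁ z)
      = herm (iteratedDeriv m F₂ z) (iteratedDeriv n F₂ z) := by
  have step : ∀ m n, (∀ z ∈ D, herm (iteratedDeriv m F₁ z) (iteratedDeriv n F₁ z)
      = herm (iteratedDeriv m F₂ z) (iteratedDeriv n F₂ z)) → ∀ z ∈ D,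
      herm (iteratedDeriv (m + 1) F₁ z) (iteratedDeriv n F₁ z)
        = herm (iteratedDeriv (m + 1) F₂ z) (iteratedDeriv n F₂ z) ∧
      herm (iteratedDeriv m F₁ z) (iteratedDeriv (n + 1) F₁ z)
        = herm (iteratedDeriv m F₂ z) (iteratedDeriv (n + 1) F₂ z) :=
    fun m n hmn z hz => herm_deriv_eq_of_eventually_herm_eq
      (hF₁.hasDerivAt_iteratedDeriv hz m) (hF₁.hasDerivAt_iteratedDeriv hz n)
      (hF₂.hasDerivAt_iteratedDeriv hz m) (hF₂.hasDerivAt_iteratedDeriv hz n)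
      (eventually_of_mem (hD.mem_nhds hz) hmn)
  induction m generalizing n with
  | zero =>
    induction n with
    | zero => simpa only [iteratedDeriv_zero] using h
    | succ n ih => exact fun z hz => (step 0 n ih z hz).2
  | succ m ih => exact fun z hz => (step m n (ih n) z hz).1

end SpecialPair

theorem stmt_10_general (D : Set ℂ) (hD : IsOpen D) (hconn : IsConnected D)
    (f₁ g₁ f₂ g₂ : ℂ → ℂ)
    (hf₁ : DifferentiableOn ℂ f₁ D) (hg₁ : DifferentiableOn ℂ g₁ D)
    (hf₂ : DifferentiableOn ℂ f₂ D) (hg₂ : DifferentiableOn ℂ g₂ D)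
    (hτ₁ : ∀ z ∈ D, 0 < (g₁ z / f₁ z).im)
    (hmetric : ∀ z ∈ D, (g₁ z / f₁ z).im * ‖f₁ z‖ ^ 2
      = (g₂ z / f₂ z).im * ‖f₂ z‖ ^ 2) :
    ∃ (θ a b c d : ℝ), a * d - b * c = 1 ∧
      ∀ z ∈ D, f₂ z = Complex.exp (θ * Complex.I) * ((a : ℂ) * f₁ z + (c : ℂ) * g₁ z) ∧
        g₂ z = Complex.exp (θ * Complex.I) * ((b : ℂ) * f₁ z + (d : ℂ) * g₁ z) := by
  open SpecialPair in
  set F₁ : ℂ → Fin 2 → ℂ := fun z => ![f₁ z, g₁ z]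
  set F₂ : ℂ → Fin 2 → ℂ := fun z => ![f₂ z, g₂ z]
  have hF₁ : AnalyticOnNhd ℂ F₁ D :=
    (hf₁.finCons (hg₁.finCons (differentiableOn_const _))).analyticOnNhd hD
  have hF₂ : AnalyticOnNhd ℂ F₂ D :=
    (hf₂.finCons (hg₂.finCons (differentiableOn_const _))).analyticOnNhd hD
  obtain ⟨z₀, hz₀⟩ := hconn.nonempty
  have hgram := herm_iteratedDeriv_eq hD hF₁ hF₂ fun z hz => by
    simp only [F₁, F₂, herm_pair_self, hmetric z hz]
  obtain ⟨T, hT, hTF⟩ := exists_unitary_mulVec_eq (fun m => iteratedDeriv m F₁ z₀)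
    (fun m => iteratedDeriv m F₂ z₀) (fun m n => hgram m n z₀ hz₀)
    (by simpa only [iteratedDeriv_zero] using herm_pair_self_ne_zero (hτ₁ z₀ hz₀))
  obtain ⟨θ, M, hM, rfl⟩ := exists_exp_smul_real_of_unitary hT
  have hEq := eqOn_comp_of_iteratedDeriv_eq hD hconn.isPreconnected hF₁ hF₂
    (Matrix.mulVecLin _).toContinuousLinearMap hz₀ fun n => (hTF n).symm
  refine ⟨θ, M 0 0, M 1 0, M 0 1, M 1 1, by rw [← hM, Matrix.det_fin_two]; ring, fun z hz => ?_⟩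
  simpa [F₁, F₂, Matrix.mulVec, dotProduct, Fin.sum_univ_two] using hEq hz

/-- Two special pairs on a domain inducing the same metric differ by a twist and an
`SL₂(ℝ)` transformation. -/
theorem stmt_10 (D : Set ℂ) (hD : IsOpen D) (hconn : IsConnected D)
    (f₁ g₁ f₂ g₂ : ℂ → ℂ)
    (hf₁ : DifferentiableOn ℂ f₁ D) (hg₁ : DifferentiableOn ℂ g₁ D)
    (hf₂ : DifferentiableOn ℂ f₂ D) (hg₂ : DifferentiableOn ℂ g₂ D)
    (hf₁0 : ∀ z ∈ D, f₁ z ≠ 0) (hf₂0 : ∀ z ∈ D, f₂ z ≠ 0)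
    (hτ₁ : ∀ z ∈ D, 0 < (g₁ z / f₁ z).im) (hτ₂ : ∀ z ∈ D, 0 < (g₂ z / f₂ z).im)
    (hmetric : ∀ z ∈ D, (g₁ z / f₁ z).im * ‖f₁ z‖ ^ 2
      = (g₂ z / f₂ z).im * ‖f₂ z‖ ^ 2) :
    ∃ (θ a b c d : ℝ), a * d - b * c = 1 ∧
      ∀ z ∈ D, f₂ z = Complex.exp (θ * Complex.I) * ((a : ℂ) * f₁ z + (c : ℂ) * g₁ z) ∧
        g₂ z = Complex.exp (θ * Complex.I) * ((b : ℂ) * f₁ z + (d : ℂ) * g₁ z) :=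
  stmt_10_general D hD hconn f₁ g₁ f₂ g₂ hf₁ hg₁ hf₂ hg₂ hτ₁ hmetric
end

section
/- Let D ⊆ ℂ be a nonempty connected open set, and let f, g : D → ℂ be holomorphic with f nowhere vanishing and Im(g(z)/f(z)) > 0 for all z ∈ D. Suppose there exist θ ∈ ℝ with θ not an integer multiple of π and a matrix [[a, b], [c, d]] ∈ SL₂(ℝ) such that e^{iθ}·f = a·f + c·g and e^{iθ}·g = b·f + d·g on D. Then there is a constant λ ∈ ℂ with g = λ·f on D (so g/f is constant and the induced metric is flat). (This is the coordinate form of the statement that twisting by θ ∉ πℤ gives the same special Kähler structure only if the metric is flat.) -/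
open Complex

/-- `c ≠ 0`, since otherwise the non-real `μ` would equal the real `a`; so the ratio `y / x` depends
only on `μ, a, c`, which is why `g / f` is constant in the application. -/
theorem eq_div_mul_of_mul_eq_ofReal_mul_add {μ x y : ℂ} {a c : ℝ} (hμ : μ.im ≠ 0) (hx : x ≠ 0)
    (h : μ * x = a * x + c * y) : y = (μ - a) / c * x := by
  have hc : (c : ℂ) ≠ 0 := by
    rintro hc
    rw [hc, zero_mul, add_zero] at h
    exact hμ (by rw [mul_right_cancel₀ hx h, ofReal_im])
  field_simp
  linear_combination -h

theorem exp_mul_I_im_ne_zero {θ : ℝ} (hθ : ∀ n : ℤ, θ ≠ n * Real.pi) :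
    (exp (θ * I)).im ≠ 0 := by
  rw [exp_ofReal_mul_I_im]
  intro h
  obtain ⟨n, hn⟩ := Real.sin_eq_zero_iff.mp h
  exact hθ n hn.symm

theorem stmt_11_general (D : Set ℂ)
    (f g : ℂ → ℂ)
    (hf0 : ∀ z ∈ D, f z ≠ 0)
    (θ : ℝ) (hθ : ∀ n : ℤ, θ ≠ n * Real.pi)
    (a c : ℝ)
    (h1 : ∀ z ∈ D, Complex.exp (θ * Complex.I) * f z = (a : ℂ) * f z + (c : ℂ) * g z) :
    ∃ lam : ℂ, ∀ z ∈ D, g z = lam * f z :=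
  ⟨(exp (θ * I) - a) / c, fun z hz =>
    eq_div_mul_of_mul_eq_ofReal_mul_add (exp_mul_I_im_ne_zero hθ) (hf0 z hz) (h1 z hz)⟩

/-- If a special pair `(f, g)` is carried to its twist by `θ ∉ πℤ` by an `SL₂(ℝ)`
transformation, then `g/f` is constant (the metric is flat). -/
theorem stmt_11 (D : Set ℂ) (hD : IsOpen D) (hconn : IsConnected D)
    (f g : ℂ → ℂ) (hf : DifferentiableOn ℂ f D) (hg : DifferentiableOn ℂ g D)
    (hf0 : ∀ z ∈ D, f z ≠ 0) (hτ : ∀ z ∈ D, 0 < (g z / f z).im)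
    (θ : ℝ) (hθ : ∀ n : ℤ, θ ≠ n * Real.pi)
    (a b c d : ℝ) (hdet : a * d - b * c = 1)
    (h1 : ∀ z ∈ D, Complex.exp (θ * Complex.I) * f z = (a : ℂ) * f z + (c : ℂ) * g z)
    (h2 : ∀ z ∈ D, Complex.exp (θ * Complex.I) * g z = (b : ℂ) * f z + (d : ℂ) * g z) :
    ∃ lam : ℂ, ∀ z ∈ D, g z = lam * f z :=
  stmt_11_general D f g hf0 θ hθ a c h1
end

section
/- Let P = [[√2, 0], [0, 1/√2]] ∈ SL₂(ℝ). Then conjugation by P maps Γ(2) bijectively onto Γ₀(4): the set {P⁻¹·A·P : A ∈ Γ(2)} equals Γ₀(4) (where elements of Γ(2) and Γ₀(4) are viewed as real matrices). -/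
open Matrix MatrixGroups CongruenceSubgroup

/-- The matrix `P = [[√2, 0], [0, 1/√2]]`. -/
noncomputable def P12 : Matrix (Fin 2) (Fin 2) ℝ :=
  !![Real.sqrt 2, 0; 0, (Real.sqrt 2)⁻¹]

/-!
Conjugation by `P` sends `[[a, b], [c, d]]` to `[[a, b/2], [2c, d]]`. An element of `SL₂(ℤ)` lies
in `Γ(2)` as soon as its off-diagonal entries are even, since `ad - bc = 1` then forces `a` and `d`
to be odd. Hence the image of `Γ(2)` (`b`, `c` even) is the set of integer matrices of
determinant `1` with lower-left entry divisible by `4`, which is `Γ₀(4)`.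
-/

lemma P12_inv : P12⁻¹ = !![(Real.sqrt 2)⁻¹, 0; 0, Real.sqrt 2] := by
  have hsqrt : Real.sqrt 2 ≠ 0 := by positivity
  refine Matrix.inv_eq_left_inv ?_
  rw [P12, Matrix.mul_fin_two, inv_mul_cancel₀ hsqrt, mul_inv_cancel₀ hsqrt]
  simp [Matrix.one_fin_two]

lemma P12_inv_mul_mul_P12 (M : Matrix (Fin 2) (Fin 2) ℝ) :
    P12⁻¹ * M * P12 = !![M 0 0, M 0 1 / 2; 2 * M 1 0, M 1 1] := by
  have hsq : Real.sqrt 2 ^ 2 = 2 := Real.sq_sqrt zero_le_two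
  rw [P12_inv, P12, Matrix.eta_fin_two M, Matrix.mul_fin_two, Matrix.mul_fin_two]
  ext i j
  fin_cases i <;> fin_cases j <;> simp <;> field_simp <;> rw [hsq] <;> ring

lemma P12_inv_mul_map_intCast_mul_P12 (a b c d : ℤ) :
    P12⁻¹ * (!![a, 2 * b; c, d] : Matrix (Fin 2) (Fin 2) ℤ).map (Int.cast : ℤ → ℝ) * P12
      = (!![a, b; 2 * c, d] : Matrix (Fin 2) (Fin 2) ℤ).map (Int.cast : ℤ → ℝ) := by
  rw [P12_inv_mul_mul_P12]
  ext i j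
  fin_cases i <;> fin_cases j <;> simp

lemma det_fin_two_of_two_mul (a b c d : ℤ) :
    (!![a, 2 * b; c, d] : Matrix (Fin 2) (Fin 2) ℤ).det = (!![a, b; 2 * c, d]).det := by
  simp only [Matrix.det_fin_two_of]
  ring

lemma Gamma_two_mem_iff {A : SL(2, ℤ)} : A ∈ Gamma 2 ↔ 2 ∣ A 0 1 ∧ 2 ∣ A 1 0 := by
  have hdet : A 0 0 * A 1 1 - A 0 1 * A 1 0 = 1 := by
    rw [← Matrix.det_fin_two]; exact A.2
  simp only [Gamma_mem, ZMod.intCast_eq_one_iff_odd, ZMod.intCast_zmod_eq_zero_iff_dvd,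
    Nat.cast_ofNat]
  constructor
  · rintro ⟨-, h01, h10, -⟩
    exact ⟨h01, h10⟩
  · rintro ⟨h01, h10⟩
    have hodd : Odd (A 0 0 * A 1 1) := by
      rw [eq_add_of_sub_eq' hdet]
      exact (even_iff_two_dvd.2 (dvd_mul_of_dvd_left h01 _)).add_one
    exact ⟨(Int.odd_mul.1 hodd).1, h01, h10, (Int.odd_mul.1 hodd).2⟩

lemma Gamma0_mem_iff_dvd {N : ℕ} {A : SL(2, ℤ)} : A ∈ Gamma0 N ↔ (N : ℤ) ∣ A 1 0 := by
  rw [Gamma0_mem, ZMod.intCast_zmod_eq_zero_iff_dvd]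

lemma exists_Gamma0_four_conj_eq {A : SL(2, ℤ)} (hA : A ∈ Gamma 2) :
    ∃ B ∈ Gamma0 4, P12⁻¹ * (A : Matrix (Fin 2) (Fin 2) ℤ).map (Int.cast : ℤ → ℝ) * P12
      = (B : Matrix (Fin 2) (Fin 2) ℤ).map (Int.cast : ℤ → ℝ) := by
  obtain ⟨⟨b, hb⟩, ⟨c, hc⟩⟩ := Gamma_two_mem_iff.1 hA
  have hA_eq : (A : Matrix (Fin 2) (Fin 2) ℤ) = !![A 0 0, 2 * b; 2 * c, A 1 1] := by
    conv_lhs => rw [Matrix.eta_fin_two (A : Matrix (Fin 2) (Fin 2) ℤ), hb, hc]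
  have hdet : (!![A 0 0, b; 2 * (2 * c), A 1 1]).det = 1 := by
    rw [← det_fin_two_of_two_mul, ← hA_eq]; exact A.2
  refine ⟨⟨_, hdet⟩, Gamma0_mem_iff_dvd.2 ⟨c, by simp [← mul_assoc]⟩, ?_⟩
  conv_lhs => rw [hA_eq, P12_inv_mul_map_intCast_mul_P12]

lemma exists_Gamma_two_conj_eq {B : SL(2, ℤ)} (hB : B ∈ Gamma0 4) :
    ∃ A ∈ Gamma 2, P12⁻¹ * (A : Matrix (Fin 2) (Fin 2) ℤ).map (Int.cast : ℤ → ℝ) * P12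
      = (B : Matrix (Fin 2) (Fin 2) ℤ).map (Int.cast : ℤ → ℝ) := by
  obtain ⟨k, hk⟩ := Gamma0_mem_iff_dvd.1 hB
  have hB_eq : (B : Matrix (Fin 2) (Fin 2) ℤ) = !![B 0 0, B 0 1; 2 * (2 * k), B 1 1] := by
    conv_lhs => rw [Matrix.eta_fin_two (B : Matrix (Fin 2) (Fin 2) ℤ), hk]
    ring_nf
  have hdet : (!![B 0 0, 2 * B 0 1; 2 * k, B 1 1]).det = 1 := by
    rw [det_fin_two_of_two_mul, ← hB_eq]; exact B.2
  refine ⟨⟨_, hdet⟩, Gamma_two_mem_iff.2 ⟨⟨B 0 1, by simp⟩, ⟨k, by simp⟩⟩, ?_⟩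
  conv_rhs => rw [hB_eq]
  exact P12_inv_mul_map_intCast_mul_P12 _ _ _ _

/-- Conjugation by `[[√2, 0], [0, 1/√2]]` maps `Γ(2)` bijectively onto `Γ₀(4)`. -/
theorem stmt_12 :
    {M : Matrix (Fin 2) (Fin 2) ℝ | ∃ A ∈ Gamma 2,
        M = P12⁻¹ * ((A : Matrix (Fin 2) (Fin 2) ℤ)).map (Int.cast : ℤ → ℝ) * P12}
      = {M : Matrix (Fin 2) (Fin 2) ℝ | ∃ B ∈ Gamma0 4,
        M = ((B : Matrix (Fin 2) (Fin 2) ℤ)).map (Int.cast : ℤ → ℝ)} := by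
  ext M
  constructor
  · rintro ⟨A, hA, rfl⟩
    exact exists_Gamma0_four_conj_eq hA
  · rintro ⟨B, hB, rfl⟩
    obtain ⟨A, hA, h⟩ := exists_Gamma_two_conj_eq hB
    exact ⟨A, hA, h.symm⟩
end

section
/- N(Γ₀(2)) = 2: the set of cosets P·SL₂(ℤ) in SL₂(ℝ)/SL₂(ℤ) such that P⁻¹·A·P has integer entries for every A ∈ Γ₀(2) has exactly 2 elements. -/
open Matrix MatrixGroups CongruenceSubgroup

/-- The embedding `SL(2, ℤ) →* SL(2, ℝ)`. -/
noncomputable def toSL2R : SL(2, ℤ) →* SL(2, ℝ) :=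
  Matrix.SpecialLinearGroup.map (Int.castRingHom ℝ)

/-- `SL(2, ℤ)` as a subgroup of `SL(2, ℝ)`. -/
noncomputable def SL2ZinR : Subgroup SL(2, ℝ) := toSL2R.range

/-- The set of cosets `P·SL₂(ℤ)` in `SL₂(ℝ)/SL₂(ℤ)` such that `P⁻¹·A·P` has integer
entries for every `A ∈ G`; its cardinality is `N(G)`. -/
noncomputable def goodCosets (G : Subgroup SL(2, ℤ)) : Set (SL(2, ℝ) ⧸ SL2ZinR) :=
  {x | ∃ P : SL(2, ℝ), x = QuotientGroup.mk P ∧ ∀ A ∈ G,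
    IsIntegerMatrix ((P⁻¹ * toSL2R A * P : SL(2, ℝ)) : Matrix (Fin 2) (Fin 2) ℝ)}

/-!
If `P⁻¹ A P` is integral for `A = [[1,1],[0,1]]` and `A = [[1,0],[2,1]]`, then for
`P = [[p,q],[r,s]]` the numbers `r², rs, s²` and `2p², 2pq, 2q²` are integers. A pair of reals
with integral pairwise products is a real multiple `λ • (m, n)` of an integer vector with
`λ² ∈ ℤ`. Applying this to `(r, s)` and to `√2 • (p, q)`, the determinant condition
`ps - qr = 1` becomes `λ² μ² d² = 2` with `d ∈ ℤ`, so `{λ², μ²} = {1, 2}`. The two cases say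
that `P` or `diag(√2, 1/√2) P` is integral, i.e. that `P SL₂(ℤ)` is the coset of `1` or of
`diag(1/√2, √2)`; both cosets qualify, and they differ because `√2` is irrational.
-/

def IsInteger (x : ℝ) : Prop := ∃ k : ℤ, x = k

lemma isIntegerMatrix_of_entries {M : Matrix (Fin 2) (Fin 2) ℝ} (h00 : IsInteger (M 0 0))
    (h01 : IsInteger (M 0 1)) (h10 : IsInteger (M 1 0)) (h11 : IsInteger (M 1 1)) :
    IsIntegerMatrix M := by
  intro i j
  fin_cases i <;> fin_cases j
  exacts [h00, h01, h10, h11]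

lemma isInteger_mul_div_of_sq_eq_sq {lam c : ℝ} (hc : c ≠ 0) (h : lam ^ 2 = c ^ 2) (m : ℤ) :
    IsInteger (lam * m / c) := by
  rcases sq_eq_sq_iff_eq_or_eq_neg.1 h with rfl | rfl
  · exact ⟨m, by field_simp⟩
  · exact ⟨-m, by push_cast; field_simp⟩

theorem exists_eq_mul_int_of_isInteger_sq {r s : ℝ} (hr : IsInteger (r ^ 2))
    (hs : IsInteger (s ^ 2)) (hrs : IsInteger (r * s)) :
    ∃ (lam : ℝ) (m n : ℤ), IsInteger (lam ^ 2) ∧ r = lam * m ∧ s = lam * n := by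
  obtain ⟨a, ha⟩ := hr
  obtain ⟨b, hb⟩ := hs
  obtain ⟨c, hc⟩ := hrs
  rcases eq_or_ne r 0 with rfl | hr0
  · exact ⟨s, 0, 1, ⟨b, hb⟩, by simp, by simp⟩
  -- `s / r = c / a` is rational; writing it in lowest terms `n / m`, `lam := r / m` works
  -- because `lam ^ 2` is an integer combination of `lam ^ 2 * m ^ 2 = a` and `lam ^ 2 * n ^ 2 = b`.
  have ha0 : (a : ℝ) ≠ 0 := by rw [← ha]; positivity
  set q : ℚ := c / a
  have hm0 : ((q.den : ℤ) : ℝ) ≠ 0 := by exact_mod_cast q.den_nz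
  set lam : ℝ := r / (q.den : ℤ)
  have hrm : r = lam * (q.den : ℤ) := (div_mul_cancel₀ r hm0).symm
  have hsq : s = (q : ℝ) * r := by
    have : (q : ℝ) = c / a := by push_cast [q]; ring
    rw [this, div_mul_eq_mul_div, eq_div_iff ha0]
    linear_combination (-s) * ha + r * hc
  have hsn : s = lam * (q.num : ℤ) := by
    rw [hsq, Rat.cast_def, hrm]
    push_cast
    field_simp
  obtain ⟨x, y, hxy⟩ : IsCoprime ((q.den : ℤ) ^ 2) (q.num ^ 2) :=
    (Int.isCoprime_iff_gcd_eq_one.2 (by simpa [Int.gcd, Nat.coprime_comm] using q.reduced)).pow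
  have hxyR : (x : ℝ) * ((q.den : ℤ) : ℝ) ^ 2 + (y : ℝ) * ((q.num : ℤ) : ℝ) ^ 2 = 1 := by
    exact_mod_cast hxy
  refine ⟨lam, q.den, q.num, ⟨x * a + y * b, ?_⟩, hrm, hsn⟩
  rw [hrm] at ha
  rw [hsn] at hb
  push_cast
  linear_combination (x : ℝ) * ha + (y : ℝ) * hb - lam ^ 2 * hxyR

lemma eq_one_two_of_mul_mul_sq_eq_two {a b d : ℤ} (ha : 0 ≤ a) (h : a * b * d ^ 2 = 2) :
    (a = 1 ∧ b = 2) ∨ (a = 2 ∧ b = 1) := by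
  have hd : d ^ 2 ≤ 2 := Int.le_of_dvd two_pos ⟨a * b, by rw [← h]; ring⟩
  have hab : a * b = 2 := by
    have : -1 ≤ d ∧ d ≤ 1 := by constructor <;> nlinarith
    obtain ⟨h1, h2⟩ := this
    interval_cases d <;> simp_all
  have : a ≤ 2 := Int.le_of_dvd two_pos ⟨b, hab.symm⟩
  interval_cases a <;> omega

theorem isInteger_or_isInteger_of_sq_det_eq_two {r s t u : ℝ} (hr : IsInteger (r ^ 2))
    (hs : IsInteger (s ^ 2)) (hrs : IsInteger (r * s)) (ht : IsInteger (t ^ 2))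
    (hu : IsInteger (u ^ 2)) (htu : IsInteger (t * u)) (hdet : (t * s - u * r) ^ 2 = 2) :
    (IsInteger r ∧ IsInteger s ∧ IsInteger (t / √2) ∧ IsInteger (u / √2)) ∨
      (IsInteger t ∧ IsInteger u ∧ IsInteger (r / √2) ∧ IsInteger (s / √2)) := by
  obtain ⟨lam, m, n, ⟨N, hN⟩, rfl, rfl⟩ := exists_eq_mul_int_of_isInteger_sq hr hs hrs
  obtain ⟨mu, m', n', ⟨N', hN'⟩, rfl, rfl⟩ := exists_eq_mul_int_of_isInteger_sq ht hu htu
  have hprod : N * N' * (m' * n - n' * m) ^ 2 = 2 := by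
    have : (N : ℝ) * N' * ((m' * n - n' * m : ℤ) : ℝ) ^ 2 = 2 := by
      rw [← hN, ← hN', ← hdet]
      push_cast
      ring
    exact_mod_cast this
  have hN0 : 0 ≤ N := by exact_mod_cast hN ▸ sq_nonneg lam
  have hsqrt : √2 ^ 2 = ((2 : ℤ) : ℝ) := by simp
  have hsqrt0 : √2 ≠ 0 := by positivity
  rcases eq_one_two_of_mul_mul_sq_eq_two hN0 hprod with ⟨rfl, rfl⟩ | ⟨rfl, rfl⟩
  · have hlam : lam ^ 2 = 1 ^ 2 := by simpa using hN
    left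
    refine ⟨?_, ?_, isInteger_mul_div_of_sq_eq_sq hsqrt0 (hN'.trans hsqrt.symm) m',
      isInteger_mul_div_of_sq_eq_sq hsqrt0 (hN'.trans hsqrt.symm) n'⟩
    · simpa using isInteger_mul_div_of_sq_eq_sq one_ne_zero hlam m
    · simpa using isInteger_mul_div_of_sq_eq_sq one_ne_zero hlam n
  · have hmu : mu ^ 2 = 1 ^ 2 := by simpa using hN'
    right
    refine ⟨?_, ?_, isInteger_mul_div_of_sq_eq_sq hsqrt0 (hN.trans hsqrt.symm) m,
      isInteger_mul_div_of_sq_eq_sq hsqrt0 (hN.trans hsqrt.symm) n⟩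
    · simpa using isInteger_mul_div_of_sq_eq_sq one_ne_zero hmu m'
    · simpa using isInteger_mul_div_of_sq_eq_sq one_ne_zero hmu n'

lemma det_fin_two_eq_one {R : Type*} [CommRing R] (P : SL(2, R)) :
    P 0 0 * P 1 1 - P 0 1 * P 1 0 = 1 := by
  rw [← det_fin_two, P.det_coe]

lemma coe_inv_fin_two {R : Type*} [CommRing R] (P : SL(2, R)) :
    ((P⁻¹ : SL(2, R)) : Matrix (Fin 2) (Fin 2) R) = !![P 1 1, -P 0 1; -P 1 0, P 0 0] := by
  rw [Matrix.SpecialLinearGroup.SL2_inv_expl]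
  ext i j
  fin_cases i <;> fin_cases j <;> rfl

lemma toSL2R_apply (A : SL(2, ℤ)) (i j : Fin 2) : toSL2R A i j = (A i j : ℝ) := rfl

lemma coe_toSL2R (A : SL(2, ℤ)) :
    (toSL2R A : Matrix (Fin 2) (Fin 2) ℝ) = !![(A 0 0 : ℝ), A 0 1; A 1 0, A 1 1] := by
  ext i j
  rw [toSL2R_apply]
  fin_cases i <;> fin_cases j <;> rfl

lemma mem_SL2ZinR_of_isIntegerMatrix {P : SL(2, ℝ)} (h : IsIntegerMatrix P) : P ∈ SL2ZinR := by
  choose k hk using h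
  have hmap : (of k).map (Int.castRingHom ℝ) = P := by
    ext i j
    simp [hk i j]
  have hdet : (of k).det = 1 := by
    have := RingHom.map_det (Int.castRingHom ℝ) (of k)
    rw [RingHom.mapMatrix_apply, hmap, P.det_coe] at this
    simpa using this
  exact ⟨⟨of k, hdet⟩, Subtype.ext hmap⟩

lemma mk_eq_mk_of_isIntegerMatrix {P Q : SL(2, ℝ)} (h : IsIntegerMatrix ↑(Q⁻¹ * P)) :
    (P : SL(2, ℝ) ⧸ SL2ZinR) = Q :=
  (QuotientGroup.eq.2 (mem_SL2ZinR_of_isIntegerMatrix h)).symm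

lemma mk_one_mem_goodCosets (G : Subgroup SL(2, ℤ)) :
    ((1 : SL(2, ℝ)) : SL(2, ℝ) ⧸ SL2ZinR) ∈ goodCosets G :=
  ⟨1, rfl, fun A _ i j => ⟨A i j, by simp [toSL2R_apply]⟩⟩

def lowerTwo : SL(2, ℤ) := ⟨!![1, 0; 2, 1], by norm_num [det_fin_two_of]⟩

lemma T_mem_Gamma0_two : ModularGroup.T ∈ Gamma0 2 := by
  rw [Gamma0_mem]
  simp [ModularGroup.T]

lemma lowerTwo_mem_Gamma0_two : lowerTwo ∈ Gamma0 2 := by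
  rw [Gamma0_mem]
  simp [lowerTwo]
  decide

lemma isInteger_of_isIntegerMatrix_conj_T {P : SL(2, ℝ)}
    (h : IsIntegerMatrix ↑(P⁻¹ * toSL2R ModularGroup.T * P)) :
    IsInteger (P 1 0 ^ 2) ∧ IsInteger (P 1 1 ^ 2) ∧ IsInteger (P 1 0 * P 1 1) := by
  have hconj : ((P⁻¹ * toSL2R ModularGroup.T * P : SL(2, ℝ)) : Matrix (Fin 2) (Fin 2) ℝ) =
      !![1 + P 1 0 * P 1 1, P 1 1 ^ 2; -P 1 0 ^ 2, 1 - P 1 0 * P 1 1] := by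
    rw [Matrix.SpecialLinearGroup.coe_mul, Matrix.SpecialLinearGroup.coe_mul, coe_inv_fin_two,
      coe_toSL2R]
    ext i j
    fin_cases i <;> fin_cases j <;>
      simp [mul_apply, Fin.sum_univ_two, ModularGroup.T] <;>
      linarith [det_fin_two_eq_one P]
  rw [hconj] at h
  obtain ⟨a, ha⟩ := h 0 0
  obtain ⟨b, hb⟩ := h 0 1
  obtain ⟨c, hc⟩ := h 1 0
  simp only [of_apply, cons_val', cons_val_zero, cons_val_one, empty_val', cons_val_fin_one]
    at ha hb hc
  exact ⟨⟨-c, by push_cast; linarith⟩, ⟨b, hb⟩, ⟨a - 1, by push_cast; linarith⟩⟩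

lemma isInteger_of_isIntegerMatrix_conj_lowerTwo {P : SL(2, ℝ)}
    (h : IsIntegerMatrix ↑(P⁻¹ * toSL2R lowerTwo * P)) :
    IsInteger (2 * P 0 0 ^ 2) ∧ IsInteger (2 * P 0 1 ^ 2) ∧ IsInteger (2 * (P 0 0 * P 0 1)) := by
  have hconj : ((P⁻¹ * toSL2R lowerTwo * P : SL(2, ℝ)) : Matrix (Fin 2) (Fin 2) ℝ) =
      !![1 - 2 * (P 0 0 * P 0 1), -(2 * P 0 1 ^ 2); 2 * P 0 0 ^ 2, 1 + 2 * (P 0 0 * P 0 1)] := by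
    rw [Matrix.SpecialLinearGroup.coe_mul, Matrix.SpecialLinearGroup.coe_mul, coe_inv_fin_two,
      coe_toSL2R]
    ext i j
    fin_cases i <;> fin_cases j <;>
      simp [mul_apply, Fin.sum_univ_two, lowerTwo] <;>
      linarith [det_fin_two_eq_one P]
  rw [hconj] at h
  obtain ⟨a, ha⟩ := h 0 0
  obtain ⟨b, hb⟩ := h 0 1
  obtain ⟨c, hc⟩ := h 1 0
  simp only [of_apply, cons_val', cons_val_zero, cons_val_one, empty_val', cons_val_fin_one]
    at ha hb hc
  exact ⟨⟨c, hc⟩, ⟨-b, by push_cast; linarith⟩, ⟨1 - a, by push_cast; linarith⟩⟩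

noncomputable def diagSqrtTwo : SL(2, ℝ) := ⟨!![(√2)⁻¹, 0; 0, √2], by simp [det_fin_two_of]⟩

lemma coe_diagSqrtTwo_inv :
    ((diagSqrtTwo⁻¹ : SL(2, ℝ)) : Matrix (Fin 2) (Fin 2) ℝ) = !![√2, 0; 0, (√2)⁻¹] := by
  rw [coe_inv_fin_two]
  simp [diagSqrtTwo]

lemma coe_diagSqrtTwo_inv_mul (P : SL(2, ℝ)) :
    ((diagSqrtTwo⁻¹ * P : SL(2, ℝ)) : Matrix (Fin 2) (Fin 2) ℝ) =
      !![√2 * P 0 0, √2 * P 0 1; P 1 0 / √2, P 1 1 / √2] := by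
  rw [Matrix.SpecialLinearGroup.coe_mul, coe_diagSqrtTwo_inv]
  ext i j
  fin_cases i <;> fin_cases j <;> simp [mul_apply, Fin.sum_univ_two, div_eq_inv_mul]

lemma mk_diagSqrtTwo_mem_goodCosets :
    (diagSqrtTwo : SL(2, ℝ) ⧸ SL2ZinR) ∈ goodCosets (Gamma0 2) := by
  refine ⟨diagSqrtTwo, rfl, fun A hA => ?_⟩
  obtain ⟨c, hc⟩ := (ZMod.intCast_zmod_eq_zero_iff_dvd (A 1 0) 2).1 (Gamma0_mem.1 hA)
  have hconj : ((diagSqrtTwo⁻¹ * toSL2R A * diagSqrtTwo : SL(2, ℝ)) :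
      Matrix (Fin 2) (Fin 2) ℝ) = !![(A 0 0 : ℝ), 2 * A 0 1; A 1 0 / 2, A 1 1] := by
    rw [Matrix.SpecialLinearGroup.coe_mul, Matrix.SpecialLinearGroup.coe_mul,
      coe_diagSqrtTwo_inv, coe_toSL2R]
    ext i j
    fin_cases i <;> fin_cases j <;>
      simp [mul_apply, Fin.sum_univ_two, diagSqrtTwo] <;> field_simp <;> simp [mul_comm]
  rw [hconj]
  exact isIntegerMatrix_of_entries ⟨A 0 0, rfl⟩ ⟨2 * A 0 1, by simp⟩ ⟨c, by simp [hc]⟩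
    ⟨A 1 1, rfl⟩

lemma mk_one_ne_mk_diagSqrtTwo :
    ((1 : SL(2, ℝ)) : SL(2, ℝ) ⧸ SL2ZinR) ≠ diagSqrtTwo := by
  intro h
  obtain ⟨A, hA⟩ := QuotientGroup.eq.1 h
  have h11 := congrArg (fun X : SL(2, ℝ) => (X : Matrix (Fin 2) (Fin 2) ℝ) 1 1) hA
  simp only [inv_one, one_mul, toSL2R_apply] at h11
  exact irrational_sqrt_two.ne_int (A 1 1) (by simpa [diagSqrtTwo] using h11.symm)

lemma mk_eq_one_or_mk_eq_diagSqrtTwo {P : SL(2, ℝ)}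
    (hT : IsIntegerMatrix ↑(P⁻¹ * toSL2R ModularGroup.T * P))
    (hU : IsIntegerMatrix ↑(P⁻¹ * toSL2R lowerTwo * P)) :
    (P : SL(2, ℝ) ⧸ SL2ZinR) = (1 : SL(2, ℝ)) ∨ (P : SL(2, ℝ) ⧸ SL2ZinR) = diagSqrtTwo := by
  obtain ⟨hr2, hs2, hrs⟩ := isInteger_of_isIntegerMatrix_conj_T hT
  obtain ⟨hp2, hq2, hpq⟩ := isInteger_of_isIntegerMatrix_conj_lowerTwo hU
  have hsq : √2 ^ 2 = 2 := Real.sq_sqrt zero_le_two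
  have h0 : √2 ≠ 0 := by positivity
  have hdet : (√2 * P 0 0 * P 1 1 - √2 * P 0 1 * P 1 0) ^ 2 = 2 := by
    linear_combination (P 0 0 * P 1 1 - P 0 1 * P 1 0) ^ 2 * hsq +
      2 * (P 0 0 * P 1 1 - P 0 1 * P 1 0 + 1) * det_fin_two_eq_one P
  rcases isInteger_or_isInteger_of_sq_det_eq_two hr2 hs2 hrs (t := √2 * P 0 0) (u := √2 * P 0 1)
    (by rwa [mul_pow, hsq]) (by rwa [mul_pow, hsq]) (by rwa [mul_mul_mul_comm, ← sq, hsq])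
    hdet with ⟨hr, hs, hp, hq⟩ | ⟨hp, hq, hr, hs⟩
  · left
    apply mk_eq_mk_of_isIntegerMatrix
    rw [inv_one, one_mul]
    rw [mul_div_cancel_left₀ _ h0] at hp hq
    exact isIntegerMatrix_of_entries hp hq hr hs
  · right
    apply mk_eq_mk_of_isIntegerMatrix
    rw [coe_diagSqrtTwo_inv_mul]
    exact isIntegerMatrix_of_entries hp hq hr hs

/-- `N(Γ₀(2)) = 2`. -/
theorem stmt_13 : (goodCosets (Gamma0 2)).ncard = 2 := by
  have hcosets : goodCosets (Gamma0 2) =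
      {((1 : SL(2, ℝ)) : SL(2, ℝ) ⧸ SL2ZinR), (diagSqrtTwo : SL(2, ℝ) ⧸ SL2ZinR)} := by
    ext x
    constructor
    · rintro ⟨P, rfl, hP⟩
      exact mk_eq_one_or_mk_eq_diagSqrtTwo (hP _ T_mem_Gamma0_two) (hP _ lowerTwo_mem_Gamma0_two)
    · rintro (rfl | rfl)
      exacts [mk_one_mem_goodCosets _, mk_diagSqrtTwo_mem_goodCosets]
  rw [hcosets, Set.ncard_pair mk_one_ne_mk_diagSqrtTwo]
end
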